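/- arXiv:1908.09012 — 8 statements merged into one kernel-verified Lean document; each statement's English description precedes it below -/
import Mathlib

section
/- Let E be an Archimedean Riesz space and (s_n)_{n∈ℕ} a sequence in the positive cone E_+ that order-converges to 0. Let (b_n)_{n∈ℕ} be a non-decreasing sequence of positive real numbers with b_n → ∞. Then the sequence z_n := (1/b_n) · Σ_{i=1}^{n-1} (b_{i+1} − b_i) • s_i order-converges to 0 as n → ∞. -/
/-!
Write `f i := (b (i + 1) - b i) • s i` and let `v` witness `s → 0`. Splitting the sum at any
index `m`, the tail `∑_{m ≤ i < n} f i` telescopes to at most `b n • v m`, so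
`z n ≤ (b n)⁻¹ • C m + v m` with `C m := ∑_{1 ≤ i < m} f i` independent of `n`. For fixed `m` the
right-hand side decreases in `n`, and as `b n → ∞` the Archimedean property pushes any common
lower bound below `v m`; hence the infima over `m ≤ n` of these bounds form the required
dominating sequence.
-/

open Filter

/-- A sequence `x` in a lattice-ordered abelian group order-converges to `l` if there is a
non-increasing sequence `v` with infimum `0` dominating `|x n - l|`. -/
def OrderConvTo {E : Type*} [Lattice E] [AddCommGroup E] (x : ℕ → E) (l : E) : Prop :=
  ∃ v : ℕ → E, (∀ n, v (n + 1) ≤ v n) ∧ IsGLB (Set.range v) 0 ∧ ∀ n, |x n - l| ≤ v n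

section OrderConvergence

variable {E : Type*} [Lattice E] [AddCommGroup E] [IsOrderedAddMonoid E]

theorem OrderConvTo.zero_of_abs_le_family {x : ℕ → E} (u : ℕ → ℕ → E)
    (hu : ∀ m, Antitone fun n => u n m) (hxu : ∀ n m, |x n| ≤ u n m)
    (hglb : ∀ c, (∀ m n, m ≤ n → c ≤ u n m) → c ≤ 0) :
    OrderConvTo x 0 := by
  let w n := (Finset.range (n + 1)).inf' Finset.nonempty_range_add_one (u n)
  have hw_le : ∀ m n, m ≤ n → w n ≤ u n m := fun m n hmn =>
    Finset.inf'_le _ (Finset.mem_range.2 (Nat.lt_succ_of_le hmn))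
  have habs_le_w : ∀ n, |x n| ≤ w n := fun n => Finset.le_inf' _ _ fun m _ => hxu n m
  refine ⟨w, fun n => ?_, ⟨?_, fun c hc => hglb c ?_⟩, fun n => by simpa using habs_le_w n⟩
  · exact Finset.le_inf' _ _ fun m hm =>
      (hw_le m (n + 1) (by simp at hm; omega)).trans (hu m n.le_succ)
  · rintro _ ⟨n, rfl⟩
    exact (abs_nonneg _).trans (habs_le_w n)
  · exact fun m n hmn => (hc ⟨n, rfl⟩).trans (hw_le m n hmn)

end OrderConvergence

section Archimedean

variable {E : Type*} [AddCommGroup E] [PartialOrder E] [IsOrderedAddMonoid E] [Module ℝ E]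
  [PosSMulMono ℝ E]

theorem le_zero_of_eventually_le_inv_smul {C d : E} (hC0 : 0 ≤ C)
    (hC : IsGLB (Set.range fun k : ℕ => ((k : ℝ) + 1)⁻¹ • C) 0)
    {b : ℕ → ℝ} (hbtop : Tendsto b atTop atTop) (h : ∀ᶠ n in atTop, d ≤ (b n)⁻¹ • C) :
    d ≤ 0 := by
  refine hC.2 ?_
  rintro _ ⟨k, rfl⟩
  obtain ⟨n, hdn, hkn⟩ := (h.and (hbtop.eventually_ge_atTop ((k : ℝ) + 1))).exists
  calc d ≤ (b n)⁻¹ • C := hdn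
    _ ≤ ((k : ℝ) + 1)⁻¹ • C := smul_le_smul_of_nonneg_right (inv_anti₀ (by positivity) hkn) hC0

end Archimedean

section WeightedSums

theorem Finset.sum_Ico_le_sum_Ico_add_sum_Ico {M : Type*} [AddCommMonoid M] [PartialOrder M]
    [IsOrderedAddMonoid M] {f : ℕ → M} (hf : ∀ i, 0 ≤ f i) (a m n : ℕ) :
    ∑ i ∈ Finset.Ico a n, f i ≤ ∑ i ∈ Finset.Ico a m, f i + ∑ i ∈ Finset.Ico m n, f i := by
  rw [← Finset.sum_union (Finset.Ico_disjoint_Ico_consecutive a m n)]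
  exact Finset.sum_le_sum_of_subset_of_nonneg Finset.Ico_subset_Ico_union_Ico fun i _ _ => hf i

theorem Finset.sum_Ico_succ_sub_le {b : ℕ → ℝ} (hb0 : ∀ n, 0 ≤ b n) (m n : ℕ) :
    ∑ i ∈ Finset.Ico m n, (b (i + 1) - b i) ≤ b n := by
  rcases le_or_gt m n with hmn | hnm
  · rw [Finset.sum_Ico_eq_sub _ hmn, Finset.sum_range_sub, Finset.sum_range_sub]
    linarith [hb0 m, hb0 0]
  · simpa [Finset.Ico_eq_empty_of_le hnm.le] using hb0 n

variable {E : Type*} [AddCommGroup E] [PartialOrder E] [IsOrderedAddMonoid E] [Module ℝ E]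
  [PosSMulMono ℝ E] {b : ℕ → ℝ} {s v : ℕ → E}

theorem sum_Ico_weighted_le_of_antitone (hb : Monotone b) (hb0 : ∀ n, 0 ≤ b n)
    (hsv : ∀ n, s n ≤ v n) (hv : Antitone v) (hv0 : ∀ n, 0 ≤ v n) (m n : ℕ) :
    ∑ i ∈ Finset.Ico m n, (b (i + 1) - b i) • s i ≤ b n • v m :=
  calc ∑ i ∈ Finset.Ico m n, (b (i + 1) - b i) • s i
      ≤ ∑ i ∈ Finset.Ico m n, (b (i + 1) - b i) • v m :=
        Finset.sum_le_sum fun i hi => smul_le_smul_of_nonneg_left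
          ((hsv i).trans (hv (Finset.mem_Ico.1 hi).1)) (sub_nonneg.2 (hb i.le_succ))
    _ = (∑ i ∈ Finset.Ico m n, (b (i + 1) - b i)) • v m := (Finset.sum_smul ..).symm
    _ ≤ b n • v m := smul_le_smul_of_nonneg_right (Finset.sum_Ico_succ_sub_le hb0 m n) (hv0 m)

theorem inv_smul_sum_weighted_le (hb : Monotone b) (hbpos : ∀ n, 0 < b n) (hs : ∀ n, 0 ≤ s n)
    (hsv : ∀ n, s n ≤ v n) (hv : Antitone v) (m n : ℕ) :
    (b n)⁻¹ • ∑ i ∈ Finset.Ico 1 n, (b (i + 1) - b i) • s i ≤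
      (b n)⁻¹ • ∑ i ∈ Finset.Ico 1 m, (b (i + 1) - b i) • s i + v m := by
  have hf : ∀ i, 0 ≤ (b (i + 1) - b i) • s i := fun i =>
    smul_nonneg (sub_nonneg.2 (hb i.le_succ)) (hs i)
  have htail := sum_Ico_weighted_le_of_antitone hb (fun n => (hbpos n).le) hsv hv
    (fun n => (hs n).trans (hsv n)) m n
  calc (b n)⁻¹ • ∑ i ∈ Finset.Ico 1 n, (b (i + 1) - b i) • s i
      ≤ (b n)⁻¹ • (∑ i ∈ Finset.Ico 1 m, (b (i + 1) - b i) • s i + b n • v m) := by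
        refine smul_le_smul_of_nonneg_left ?_ (inv_nonneg.2 (hbpos n).le)
        exact (Finset.sum_Ico_le_sum_Ico_add_sum_Ico hf 1 m n).trans (add_le_add le_rfl htail)
    _ = _ := by rw [smul_add, inv_smul_smul₀ (hbpos n).ne']

end WeightedSums

theorem weighted_cesaro_mean_order_tendsto_zero
    {E : Type*} [Lattice E] [AddCommGroup E] [Module ℝ E]
    [CovariantClass E E (· + ·) (· ≤ ·)] [PosSMulMono ℝ E]
    (harch : ∀ x : E, 0 ≤ x → IsGLB (Set.range fun n : ℕ => ((n : ℝ) + 1)⁻¹ • x) 0)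
    (s : ℕ → E) (hs : ∀ n, 0 ≤ s n) (hconv : OrderConvTo s 0)
    (b : ℕ → ℝ) (hbmono : Monotone b) (hbpos : ∀ n, 0 < b n)
    (hbtop : Tendsto b atTop atTop) :
    OrderConvTo (fun n => (b n)⁻¹ • ∑ i ∈ Finset.Ico 1 n, (b (i + 1) - b i) • s i) 0 := by
  have : IsOrderedAddMonoid E := { add_le_add_left := fun _ _ h c => add_le_add_left h c }
  obtain ⟨v, hv_succ, hv_glb, hsv⟩ := hconv
  have hv : Antitone v := antitone_nat_of_succ_le hv_succ
  have hs_le_v : ∀ n, s n ≤ v n := fun n => by simpa [abs_of_nonneg (hs n)] using hsv n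
  set C : ℕ → E := fun m => ∑ i ∈ Finset.Ico 1 m, (b (i + 1) - b i) • s i
  have hC0 : ∀ m, 0 ≤ C m := fun m =>
    Finset.sum_nonneg fun i _ => smul_nonneg (sub_nonneg.2 (hbmono i.le_succ)) (hs i)
  refine OrderConvTo.zero_of_abs_le_family (fun n m => (b n)⁻¹ • C m + v m)
    (fun m n n' hnn' => ?_) (fun n m => ?_) (fun c hc => hv_glb.2 ?_)
  · dsimp only
    gcongr
    exacts [hC0 m, hbpos n, hbmono hnn']
  · rw [abs_of_nonneg (smul_nonneg (inv_nonneg.2 (hbpos n).le) (hC0 n))]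
    exact inv_smul_sum_weighted_le hbmono hbpos hs hs_le_v hv m n
  · rintro _ ⟨m, rfl⟩
    refine sub_nonpos.1 (le_zero_of_eventually_le_inv_smul (hC0 m) (harch _ (hC0 m)) hbtop ?_)
    exact eventually_atTop.2 ⟨m, fun n hmn => sub_le_iff_le_add.2 (hc m n hmn)⟩
end

section
/- Kronecker's Lemma in Riesz spaces: Let E be an Archimedean Riesz space and (x_n)_{n∈ℕ} a sequence in E whose partial sums Σ_{i=1}^n x_i order-converge (to some element of E) as n → ∞. Let (b_n)_{n∈ℕ} be a non-decreasing sequence of positive real numbers with b_n → ∞. Then (1/b_n) · Σ_{i=1}^{n} b_i • x_i order-converges to 0 as n → ∞. -/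
/-!
Write `e i = ∑_{j ≤ i} x j - l`, so that `|e i| ≤ v i` with `v` decreasing to `0`. Summation by
parts gives `∑_{i ≤ n} b i • x i = b n • e n + b 0 • l - ∑_{i < n} (b (i+1) - b i) • e i`;
splitting the last sum at any `k ≤ n` and using that `b` is non-decreasing yields
`|(b n)⁻¹ • ∑_{i ≤ n} b i • x i| ≤ 2 • v k + (b k / b n) • v 0`.
As `b n → ∞`, the bound `2 • v k + (k + 1)⁻¹ • v 0` eventually holds for each fixed `k`, and by the
Archimedean property these bounds decrease to `0`. Letting `k` grow with `n` slowly enough turns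
them into a single dominating sequence.
-/

open Filter

open Set

section SummationByParts

variable {R M : Type*} [CommRing R] [AddCommGroup M] [Module R M]

theorem sum_Icc_smul_eq_by_parts (b : ℕ → R) (x : ℕ → M) (l : M) (n : ℕ) :
    ∑ i ∈ Finset.Icc 1 n, b i • x i =
      b n • (∑ i ∈ Finset.Icc 1 n, x i - l) + b 0 • l
        - ∑ i ∈ Finset.range n, (b (i + 1) - b i) • (∑ j ∈ Finset.Icc 1 i, x j - l) := by
  induction n with
  | zero => simp
  | succ n ih =>
    rw [Finset.sum_Icc_succ_top (by omega), ih, Finset.sum_range_succ,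
      Finset.sum_Icc_succ_top (by omega)]
    module

end SummationByParts

section Lattice

variable {E : Type*} [Lattice E] [AddCommGroup E]

theorem orderConvTo_of_eventually_abs_sub_le {y : ℕ → E} {l : E} {B : ℕ → E}
    (hB : Antitone B) (hB_glb : IsGLB (range B) 0) (h_zero : ∀ n, |y n - l| ≤ B 0)
    (h_ev : ∀ k, ∀ᶠ n in atTop, |y n - l| ≤ B k) : OrderConvTo y l := by
  classical
  choose N hN using fun k => eventually_atTop.1 (h_ev k)
  -- `κ n` is the last index whose bound is already in force at time `n`.
  let κ n := Nat.findGreatest (fun k => N k ≤ n) n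
  have hκ_mono : Monotone κ := fun m n hmn =>
    Nat.findGreatest_mono (fun _ hk => hk.trans hmn) hmn
  have hκ_unbounded : ∀ k, k ≤ κ (max k (N k)) := fun k =>
    Nat.le_findGreatest (le_max_left _ _) (le_max_right _ _)
  refine ⟨B ∘ κ, fun n => hB (hκ_mono n.le_succ), ⟨?_, fun c hc => hB_glb.2 ?_⟩, fun n => ?_⟩
  · rintro _ ⟨n, rfl⟩
    exact hB_glb.1 ⟨_, rfl⟩
  · rintro _ ⟨k, rfl⟩
    exact (hc ⟨_, rfl⟩).trans (hB (hκ_unbounded k))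
  · rcases eq_or_ne (κ n) 0 with h | h
    · simpa [Function.comp_apply, h] using h_zero n
    · exact hN _ n (Nat.findGreatest_of_ne_zero (P := fun k => N k ≤ n) rfl h)

section

variable [IsOrderedAddMonoid E]

theorem IsGLB.range_add_of_antitone {a b : ℕ → E} {s t : E} (ha : Antitone a) (hb : Antitone b)
    (hs : IsGLB (range a) s) (ht : IsGLB (range b) t) :
    IsGLB (range fun n => a n + b n) (s + t) := by
  refine ⟨?_, fun c hc => ?_⟩
  · rintro _ ⟨n, rfl⟩
    exact add_le_add (hs.1 ⟨n, rfl⟩) (ht.1 ⟨n, rfl⟩)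
  · have h : ∀ m n, c ≤ a m + b n := fun m n =>
      (hc ⟨max m n, rfl⟩).trans (add_le_add (ha (le_max_left m n)) (hb (le_max_right m n)))
    have h' : ∀ n, c - s ≤ b n := fun n =>
      sub_le_comm.1 (hs.2 (by rintro _ ⟨m, rfl⟩; exact sub_le_iff_le_add.2 (h m n)))
    exact sub_le_iff_le_add'.1 (ht.2 (by rintro _ ⟨n, rfl⟩; exact h' n))

end

variable [Module ℝ E] [PosSMulMono ℝ E]

theorem IsGLB.range_smul_zero {ι : Type*} {v : ι → E} (hv : IsGLB (range v) 0) {c : ℝ}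
    (hc : 0 < c) : IsGLB (range fun i => c • v i) 0 := by
  simpa [← range_comp, Function.comp_def] using (OrderIso.smulRight (β := E) hc).isGLB_image'.2 hv

theorem abs_smul_le_smul_abs {c : ℝ} (hc : 0 ≤ c) (z : E) : |c • z| ≤ c • |z| :=
  abs_le'.2 ⟨smul_le_smul_of_nonneg_left (le_abs_self z) hc,
    by rw [← smul_neg]; exact smul_le_smul_of_nonneg_left (neg_le_abs z) hc⟩

variable [IsOrderedAddMonoid E]

theorem sum_range_sub_smul_le_of_antitone {b : ℕ → ℝ} (hb : Monotone b) {v : ℕ → E}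
    (hv : Antitone v) {k n : ℕ} (hkn : k ≤ n) :
    ∑ i ∈ Finset.range n, (b (i + 1) - b i) • v i ≤ (b k - b 0) • v 0 + (b n - b k) • v k := by
  have hΔ : ∀ i, 0 ≤ b (i + 1) - b i := fun i => sub_nonneg.2 (hb i.le_succ)
  rw [← Finset.sum_range_add_sum_Ico _ hkn, ← Finset.sum_range_sub, ← Finset.sum_Ico_sub _ hkn,
    Finset.sum_smul, Finset.sum_smul]
  exact add_le_add
    (Finset.sum_le_sum fun i _ => smul_le_smul_of_nonneg_left (hv (Nat.zero_le i)) (hΔ i))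
    (Finset.sum_le_sum fun i hi =>
      smul_le_smul_of_nonneg_left (hv (Finset.mem_Ico.1 hi).1) (hΔ i))

theorem abs_sum_Icc_smul_le {b : ℕ → ℝ} (hb : Monotone b) (hb0 : 0 ≤ b 0) {x : ℕ → E} {l : E}
    {v : ℕ → E} (hv : Antitone v) (hxv : ∀ n, |∑ i ∈ Finset.Icc 1 n, x i - l| ≤ v n)
    {k n : ℕ} (hkn : k ≤ n) :
    |∑ i ∈ Finset.Icc 1 n, b i • x i| ≤ (2 * b n) • v k + b k • v 0 := by
  have hb_nonneg : ∀ i, 0 ≤ b i := fun i => hb0.trans (hb (Nat.zero_le i))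
  have hv_nonneg : ∀ i, 0 ≤ v i := fun i => (abs_nonneg _).trans (hxv i)
  have hl : |l| ≤ v 0 := by simpa using hxv 0
  have h_tail : |∑ i ∈ Finset.range n, (b (i + 1) - b i) • (∑ j ∈ Finset.Icc 1 i, x j - l)|
      ≤ ∑ i ∈ Finset.range n, (b (i + 1) - b i) • v i :=
    (Finset.le_sum_of_subadditive _ abs_zero.le abs_add_le _ _).trans <|
      Finset.sum_le_sum fun i _ => (abs_smul_le_smul_abs (sub_nonneg.2 (hb i.le_succ)) _).trans
        (smul_le_smul_of_nonneg_left (hxv i) (sub_nonneg.2 (hb i.le_succ)))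
  rw [sum_Icc_smul_eq_by_parts, sub_eq_add_neg]
  calc _ ≤ |b n • (∑ i ∈ Finset.Icc 1 n, x i - l)| + |b 0 • l|
        + |∑ i ∈ Finset.range n, (b (i + 1) - b i) • (∑ j ∈ Finset.Icc 1 i, x j - l)| :=
        (abs_add_le _ _).trans (add_le_add (abs_add_le _ _) (abs_neg _).le)
    _ ≤ b n • v n + b 0 • v 0 + ((b k - b 0) • v 0 + (b n - b k) • v k) := by
        refine add_le_add (add_le_add ?_ ?_)
          (h_tail.trans (sum_range_sub_smul_le_of_antitone hb hv hkn))
        · exact (abs_smul_le_smul_abs (hb_nonneg n) _).trans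
            (smul_le_smul_of_nonneg_left (hxv n) (hb_nonneg n))
        · exact (abs_smul_le_smul_abs (hb_nonneg 0) _).trans
            (smul_le_smul_of_nonneg_left hl (hb_nonneg 0))
    _ = b n • v n + (b n - b k) • v k + b k • v 0 := by module
    _ ≤ b n • v k + b n • v k + b k • v 0 := by
        refine add_le_add_left (add_le_add ?_ ?_) _
        · exact smul_le_smul_of_nonneg_left (hv hkn) (hb_nonneg n)
        · exact smul_le_smul_of_nonneg_right (by linarith [hb_nonneg k]) (hv_nonneg k)
    _ = (2 * b n) • v k + b k • v 0 := by module

theorem abs_inv_smul_sum_Icc_smul_le {b : ℕ → ℝ} (hb : Monotone b) (hb_pos : ∀ n, 0 < b n)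
    {x : ℕ → E} {l : E} {v : ℕ → E} (hv : Antitone v)
    (hxv : ∀ n, |∑ i ∈ Finset.Icc 1 n, x i - l| ≤ v n) {k n : ℕ} (hkn : k ≤ n) :
    |(b n)⁻¹ • ∑ i ∈ Finset.Icc 1 n, b i • x i| ≤ (2 : ℝ) • v k + (b k / b n) • v 0 := by
  have hbn := (hb_pos n).ne'
  calc _ ≤ (b n)⁻¹ • |∑ i ∈ Finset.Icc 1 n, b i • x i| :=
        abs_smul_le_smul_abs (inv_nonneg.2 (hb_pos n).le) _
    _ ≤ (b n)⁻¹ • ((2 * b n) • v k + b k • v 0) :=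
        smul_le_smul_of_nonneg_left (abs_sum_Icc_smul_le hb (hb_pos 0).le hv hxv hkn)
          (inv_nonneg.2 (hb_pos n).le)
    _ = (2 : ℝ) • v k + (b k / b n) • v 0 := by
        rw [smul_add, smul_smul, smul_smul, inv_mul_eq_div, inv_mul_eq_div,
          mul_div_cancel_right₀ _ hbn]

end Lattice

/-- Kronecker's Lemma in Riesz spaces. -/
theorem kronecker_lemma_riesz
    {E : Type*} [Lattice E] [AddCommGroup E] [Module ℝ E]
    [CovariantClass E E (· + ·) (· ≤ ·)] [PosSMulMono ℝ E]
    (harch : ∀ x : E, 0 ≤ x → IsGLB (Set.range fun n : ℕ => ((n : ℝ) + 1)⁻¹ • x) 0)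
    (x : ℕ → E) (hsum : ∃ l : E, OrderConvTo (fun n => ∑ i ∈ Finset.Icc 1 n, x i) l)
    (b : ℕ → ℝ) (hbmono : Monotone b) (hbpos : ∀ n, 0 < b n)
    (hbtop : Tendsto b atTop atTop) :
    OrderConvTo (fun n => (b n)⁻¹ • ∑ i ∈ Finset.Icc 1 n, b i • x i) 0 := by
  have : IsOrderedAddMonoid E := { add_le_add_left := fun _ _ h c => add_le_add_left h c }
  obtain ⟨l, v, hv_succ, hv_glb, hxv⟩ := hsum
  have hv : Antitone v := antitone_nat_of_succ_le hv_succ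
  have hv0 : 0 ≤ v 0 := hv_glb.1 ⟨0, rfl⟩
  have h_two : Antitone fun k => (2 : ℝ) • v k := fun m n hmn =>
    smul_le_smul_of_nonneg_left (hv hmn) zero_le_two
  have h_inv : Antitone fun k : ℕ => ((k : ℝ) + 1)⁻¹ • v 0 := fun m n hmn =>
    smul_le_smul_of_nonneg_right (inv_anti₀ (by positivity) (by gcongr)) hv0
  have h_bound : ∀ k n, k ≤ n → b k / b n ≤ ((k : ℝ) + 1)⁻¹ →
      |(b n)⁻¹ • ∑ i ∈ Finset.Icc 1 n, b i • x i - 0| ≤ (2 : ℝ) • v k + ((k : ℝ) + 1)⁻¹ • v 0 := by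
    intro k n hkn hbkn
    rw [sub_zero]
    exact (abs_inv_smul_sum_Icc_smul_le hbmono hbpos hv hxv hkn).trans
      (add_le_add_right (smul_le_smul_of_nonneg_right hbkn hv0) _)
  refine orderConvTo_of_eventually_abs_sub_le (h_two.add h_inv)
    (by simpa only [add_zero] using
      (hv_glb.range_smul_zero two_pos).range_add_of_antitone h_two h_inv (harch _ hv0))
    (fun n => h_bound 0 n n.zero_le (by simpa using (div_le_one (hbpos n)).2 (hbmono n.zero_le)))
    (fun k => ?_)
  filter_upwards [eventually_ge_atTop k, hbtop.eventually_ge_atTop (((k : ℝ) + 1) * b k)]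
    with n hkn hbn
  refine h_bound k n hkn ?_
  rwa [div_le_iff₀ (hbpos n), inv_mul_eq_div, le_div_iff₀ (by positivity), mul_comm]
end

section
/- Conditional Hölder inequality for sums: let (Ω, ℱ, μ) be a probability space, let m be a sub-σ-algebra of ℱ, let p, q be real numbers with 1 < p < ∞, 1 < q < ∞ and 1/p + 1/q = 1, and let n ∈ ℕ. Let x_1, …, x_n be measurable functions with each |x_i|^p integrable, and y_1, …, y_n measurable functions with each |y_i|^q integrable. Then each product x_i·y_i is integrable, and almost everywhere Σ_{i=1}^n E[|x_i y_i| | m] ≤ (Σ_{i=1}^n E[|x_i|^p | m])^{1/p} · (Σ_{i=1}^n E[|y_i|^q | m])^{1/q}. -/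
/-!
By Young's inequality, `|x y| ≤ e^{ps} |x|^p / p + e^{-qs} |y|^q / q` for every real `s`. Taking
conditional expectations and summing gives, almost surely and simultaneously for the countably
many rational `s`, `∑ E[|x_i y_i| | m] ≤ e^{ps} A / p + e^{-qs} B / q`, where
`A = ∑ E[|x_i|^p | m]` and `B = ∑ E[|y_i|^q | m]`. The right-hand side is continuous in `s`, so the
bound holds for all real `s`, and its infimum over `s` is `A^{1/p} B^{1/q}`.
-/

open MeasureTheory

namespace Real

variable {p q : ℝ}

theorem young_inequality_of_nonneg_scaled (hpq : p.HolderConjugate q) {a b : ℝ} (ha : 0 ≤ a)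
    (hb : 0 ≤ b) (s : ℝ) :
    a * b ≤ exp (p * s) / p * a ^ p + exp (-q * s) / q * b ^ q := by
  have h := young_inequality_of_nonneg (mul_nonneg (exp_pos s).le ha)
    (mul_nonneg (exp_pos (-s)).le hb) hpq
  rw [mul_rpow (exp_pos s).le ha, mul_rpow (exp_pos (-s)).le hb, ← exp_mul, ← exp_mul,
    mul_mul_mul_comm, ← exp_add, add_neg_cancel, exp_zero, one_mul] at h
  calc a * b ≤ exp (s * p) * a ^ p / p + exp (-s * q) * b ^ q / q := h
    _ = exp (p * s) / p * a ^ p + exp (-q * s) / q * b ^ q := by ring_nf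

theorem exists_exp_mul_div_mul_add_eq (hpq : p.HolderConjugate q) {A B : ℝ} (hA : 0 < A)
    (hB : 0 < B) :
    ∃ s, exp (p * s) / p * A + exp (-q * s) / q * B = A ^ (1 / p) * B ^ (1 / q) := by
  have hp := hpq.pos.ne'
  have hq := hpq.symm.pos.ne'
  have hmul := hpq.mul_eq_add
  refine ⟨(log B - log A) / (p + q), ?_⟩
  have hx : exp (p * ((log B - log A) / (p + q))) * A = exp (log A / p + log B / q) := by
    rw [← exp_log hA, ← exp_add, exp_log hA, div_add_div _ _ hp hq, ← hmul]
    congr 1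
    field_simp
    linear_combination log A * hmul
  have hy : exp (-q * ((log B - log A) / (p + q))) * B = exp (log A / p + log B / q) := by
    rw [← exp_log hB, ← exp_add, exp_log hB, div_add_div _ _ hp hq, ← hmul]
    congr 1
    field_simp
    linear_combination log B * hmul
  rw [div_mul_eq_mul_div, div_mul_eq_mul_div, hx, hy, rpow_def_of_pos hA, rpow_def_of_pos hB,
    ← exp_add, mul_one_div, mul_one_div]
  linear_combination exp (log A / p + log B / q) * hpq.inv_add_inv_eq_one

theorem le_rpow_mul_rpow_of_forall_le (hpq : p.HolderConjugate q) {A B E : ℝ} (hA : 0 ≤ A)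
    (hB : 0 ≤ B) (h : ∀ s, E ≤ exp (p * s) / p * A + exp (-q * s) / q * B) :
    E ≤ A ^ (1 / p) * B ^ (1 / q) := by
  -- for `A + ε, B + ε > 0` the infimum over `s` is attained
  have hε : ∀ ε > 0, E ≤ (A + ε) ^ (1 / p) * (B + ε) ^ (1 / q) := by
    intro ε hε
    obtain ⟨s, hs⟩ := exists_exp_mul_div_mul_add_eq hpq (by positivity : 0 < A + ε)
      (by positivity : 0 < B + ε)
    have hp := hpq.pos
    have hq := hpq.symm.pos
    calc E ≤ exp (p * s) / p * A + exp (-q * s) / q * B := h s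
      _ ≤ exp (p * s) / p * (A + ε) + exp (-q * s) / q * (B + ε) := by gcongr <;> linarith
      _ = _ := hs
  have hcont : ContinuousAt (fun ε : ℝ => (A + ε) ^ (1 / p) * (B + ε) ^ (1 / q)) 0 :=
    ((continuousAt_const.add continuousAt_id).rpow_const (Or.inr hpq.one_div_pos.le)).mul
      ((continuousAt_const.add continuousAt_id).rpow_const (Or.inr hpq.symm.one_div_pos.le))
  have hlim := hcont.tendsto.mono_left (nhdsWithin_le_nhds (s := Set.Ioi 0))
  simp only [add_zero] at hlim
  exact ge_of_tendsto hlim (eventually_nhdsWithin_of_forall hε)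

theorem le_rpow_mul_rpow_of_forall_rat_le (hpq : p.HolderConjugate q) {A B E : ℝ} (hA : 0 ≤ A)
    (hB : 0 ≤ B) (h : ∀ r : ℚ, E ≤ exp (p * r) / p * A + exp (-q * r) / q * B) :
    E ≤ A ^ (1 / p) * B ^ (1 / q) :=
  le_rpow_mul_rpow_of_forall_le hpq hA hB fun s =>
    Rat.denseRange_cast.induction_on s (isClosed_le continuous_const (by fun_prop)) h

end Real

section CondExp

variable {Ω : Type*} {m m0 : MeasurableSpace Ω} {μ : Measure Ω} {p q : ℝ} {f g : Ω → ℝ}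

theorem integrable_mul_of_integrable_abs_rpow (hpq : p.HolderConjugate q)
    (hf : AEStronglyMeasurable f μ) (hg : AEStronglyMeasurable g μ)
    (hfp : Integrable (fun ω => |f ω| ^ p) μ) (hgq : Integrable (fun ω => |g ω| ^ q) μ) :
    Integrable (fun ω => f ω * g ω) μ := by
  refine ((hfp.div_const p).add (hgq.div_const q)).mono (hf.mul hg) (ae_of_all _ fun ω => ?_)
  rw [Real.norm_eq_abs, Real.norm_eq_abs, abs_mul]
  exact (Real.young_inequality_of_nonneg (abs_nonneg _) (abs_nonneg _) hpq).trans (le_abs_self _)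

theorem condExp_abs_mul_le (hpq : p.HolderConjugate q) (hfg : Integrable (fun ω => f ω * g ω) μ)
    (hfp : Integrable (fun ω => |f ω| ^ p) μ) (hgq : Integrable (fun ω => |g ω| ^ q) μ) (s : ℝ) :
    μ[fun ω => |f ω * g ω| | m] ≤ᵐ[μ]
      (Real.exp (p * s) / p) • μ[fun ω => |f ω| ^ p | m] +
        (Real.exp (-q * s) / q) • μ[fun ω => |g ω| ^ q | m] := by
  have hyoung : (fun ω => |f ω * g ω|) ≤ᵐ[μ]
      (Real.exp (p * s) / p) • (fun ω => |f ω| ^ p) +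
        (Real.exp (-q * s) / q) • (fun ω => |g ω| ^ q) :=
    ae_of_all _ fun ω => by
      simpa only [abs_mul, Pi.add_apply, Pi.smul_apply, smul_eq_mul] using
        Real.young_inequality_of_nonneg_scaled hpq (abs_nonneg (f ω)) (abs_nonneg (g ω)) s
  refine (condExp_mono hfg.abs ((hfp.smul _).add (hgq.smul _)) hyoung).trans ?_
  exact ((condExp_add (hfp.smul _) (hgq.smul _) m).trans
    ((condExp_smul _ _ m).add (condExp_smul _ _ m))).le

theorem condExp_abs_rpow_nonneg (f : Ω → ℝ) (p : ℝ) :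
    0 ≤ᵐ[μ] μ[fun ω => |f ω| ^ p | m] :=
  condExp_nonneg (ae_of_all _ fun ω => Real.rpow_nonneg (abs_nonneg (f ω)) p)

end CondExp

theorem condexp_holder_sums_general {Ω : Type*} {m m0 : MeasurableSpace Ω} (μ : Measure Ω)
    (p q : ℝ) (hp : 1 < p) (hpq : 1 / p + 1 / q = 1)
    (n : ℕ) (x y : Fin n → Ω → ℝ)
    (hxm : ∀ i, Measurable (x i)) (hym : ∀ i, Measurable (y i))
    (hxi : ∀ i, Integrable (fun ω => |x i ω| ^ p) μ)
    (hyi : ∀ i, Integrable (fun ω => |y i ω| ^ q) μ) :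
    (∀ i, Integrable (fun ω => x i ω * y i ω) μ) ∧
      ∀ᵐ ω ∂μ,
        ∑ i, (μ[fun ω => |x i ω * y i ω| | m]) ω ≤
          (∑ i, (μ[fun ω => |x i ω| ^ p | m]) ω) ^ (1 / p) *
            (∑ i, (μ[fun ω => |y i ω| ^ q | m]) ω) ^ (1 / q) := by
  have hpq' : p.HolderConjugate q :=
    Real.holderConjugate_iff.mpr ⟨hp, by simpa only [one_div] using hpq⟩
  have hxy i := integrable_mul_of_integrable_abs_rpow hpq' (hxm i).aestronglyMeasurable
    (hym i).aestronglyMeasurable (hxi i) (hyi i)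
  refine ⟨hxy, ?_⟩
  have hbound : ∀ᵐ ω ∂μ, ∀ (r : ℚ) i, (μ[fun ω => |x i ω * y i ω| | m]) ω ≤
      Real.exp (p * r) / p * (μ[fun ω => |x i ω| ^ p | m]) ω +
        Real.exp (-q * r) / q * (μ[fun ω => |y i ω| ^ q | m]) ω := by
    simp only [ae_all_iff]
    exact fun r i => condExp_abs_mul_le hpq' (hxy i) (hxi i) (hyi i) r
  have hx_nonneg := ae_all_iff.2 fun i => condExp_abs_rpow_nonneg (μ := μ) (m := m) (x i) p
  have hy_nonneg := ae_all_iff.2 fun i => condExp_abs_rpow_nonneg (μ := μ) (m := m) (y i) q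
  filter_upwards [hbound, hx_nonneg, hy_nonneg] with ω hω hA hB
  refine Real.le_rpow_mul_rpow_of_forall_rat_le hpq' (Finset.sum_nonneg fun i _ => hA i)
    (Finset.sum_nonneg fun i _ => hB i) fun r => ?_
  rw [Finset.mul_sum, Finset.mul_sum, ← Finset.sum_add_distrib]
  exact Finset.sum_le_sum fun i _ => hω r i

/-- Conditional Hölder inequality for sums. -/
theorem condexp_holder_sums {Ω : Type*} {m m0 : MeasurableSpace Ω} (μ : Measure Ω)
    [IsProbabilityMeasure μ] (hm : m ≤ m0)
    (p q : ℝ) (hp : 1 < p) (hq : 1 < q) (hpq : 1 / p + 1 / q = 1)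
    (n : ℕ) (x y : Fin n → Ω → ℝ)
    (hxm : ∀ i, Measurable (x i)) (hym : ∀ i, Measurable (y i))
    (hxi : ∀ i, Integrable (fun ω => |x i ω| ^ p) μ)
    (hyi : ∀ i, Integrable (fun ω => |y i ω| ^ q) μ) :
    (∀ i, Integrable (fun ω => x i ω * y i ω) μ) ∧
      ∀ᵐ ω ∂μ,
        ∑ i, (μ[fun ω => |x i ω * y i ω| | m]) ω ≤
          (∑ i, (μ[fun ω => |x i ω| ^ p | m]) ω) ^ (1 / p) *
            (∑ i, (μ[fun ω => |y i ω| ^ q | m]) ω) ^ (1 / q) :=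
  condexp_holder_sums_general (m0 := m0) μ p q hp hpq n x y hxm hym hxi hyi
end

section
/- Hájek–Rényi–Chow maximal inequality (conditional form): let (Ω, ℱ, μ) be a probability space with a filtration (ℱ_i)_{i ≥ 1}, and let (Y_i)_{i ≥ 1} be a submartingale with respect to (ℱ_i). Let (a_i)_{i ≥ 1} be a non-decreasing sequence of positive real numbers, and let g : Ω → ℝ be a nonnegative, integrable, ℱ_1-measurable function. Then for every n ≥ 1, almost everywhere: E[ g · 1_{{∃ i, 1 ≤ i ≤ n, Y_i ≥ a_i · g}} | ℱ_1 ] ≤ Y_1⁺ / a_1 + Σ_{i=1}^{n−1} E[ Y_{i+1}⁺ − Y_i⁺ | ℱ_1 ] / a_{i+1}. -/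
/-!
Let `C k` (`crossingSet`) be the event that `a i * g ≤ Y i` for some `1 ≤ i ≤ k`, and let `W k`
(`majorant`) equal `g` on `C k` and `Y k⁺ / a k` off it. Pointwise, `1_{C n} g ≤ W n`,
`W 1 ≤ Y 1⁺ / a 1`, and, because `a` is positive and non-decreasing, `W (k + 1) ≤ W k + 1_{(C k)ᶜ} (Y (k + 1)⁺ - Y k⁺) / a (k + 1)`.
The positive part of a submartingale is a submartingale, so the increment `Y (k + 1)⁺ - Y k⁺` has
nonnegative `ℱ k`-conditional expectation; as `(C k)ᶜ` is `ℱ k`-measurable, restricting the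
increment to it can only lower its `ℱ 1`-conditional expectation. The one-step bounds telescope.
-/

open MeasureTheory Filter

namespace MeasureTheory

variable {Ω : Type*} {m m₁ m₂ m0 : MeasurableSpace Ω} {μ : Measure Ω}

theorem condExp_div_const (f : Ω → ℝ) (c : ℝ) (m : MeasurableSpace Ω) :
    μ[fun ω => f ω / c | m] =ᵐ[μ] fun ω => μ[f | m] ω / c := by
  have hdiv : (fun ω => f ω / c) = c⁻¹ • f := by
    ext ω
    simp [div_eq_inv_mul]
  filter_upwards [condExp_smul (μ := μ) c⁻¹ f m] with ω hω
  rw [hdiv, hω, Pi.smul_apply, smul_eq_mul, inv_mul_eq_div]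

theorem condExp_posPart_sub_posPart_nonneg (hm : m ≤ m0) [SigmaFinite (μ.trim hm)]
    {X Z : Ω → ℝ} (hXm : StronglyMeasurable[m] X) (hX : Integrable X μ) (hZ : Integrable Z μ)
    (hXZ : X ≤ᵐ[μ] μ[Z | m]) :
    0 ≤ᵐ[μ] μ[fun ω => max (Z ω) 0 - max (X ω) 0 | m] := by
  have hZ_le : μ[Z | m] ≤ᵐ[μ] μ[fun ω => max (Z ω) 0 | m] :=
    condExp_mono hZ hZ.pos_part (Eventually.of_forall fun ω => le_max_left _ _)
  have hZ_nonneg : 0 ≤ᵐ[μ] μ[fun ω => max (Z ω) 0 | m] :=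
    condExp_nonneg (Eventually.of_forall fun ω => le_max_right _ _)
  have hX_pos : μ[fun ω => max (X ω) 0 | m] = fun ω => max (X ω) 0 :=
    condExp_of_stronglyMeasurable hm
      ((continuous_id.max continuous_const).comp_stronglyMeasurable hXm) hX.pos_part
  have hsub : μ[fun ω => max (Z ω) 0 - max (X ω) 0 | m]
      =ᵐ[μ] μ[fun ω => max (Z ω) 0 | m] - μ[fun ω => max (X ω) 0 | m] :=
    condExp_sub hZ.pos_part hX.pos_part m
  filter_upwards [hsub, hXZ, hZ_le, hZ_nonneg] with ω hsubω hXZω hZω hZ0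
  rw [hsubω, Pi.sub_apply, hX_pos, Pi.zero_apply, sub_nonneg]
  exact max_le (hXZω.trans hZω) hZ0

theorem condExp_indicator_le_condExp_of_condExp_nonneg (hm₁₂ : m₁ ≤ m₂) (hm₂ : m₂ ≤ m0)
    [SigmaFinite (μ.trim hm₂)] {f : Ω → ℝ} (hf : Integrable f μ) {s : Set Ω}
    (hs : MeasurableSet[m₂] s) (hf_nonneg : 0 ≤ᵐ[μ] μ[f | m₂]) :
    μ[s.indicator f | m₁] ≤ᵐ[μ] μ[f | m₁] := by
  have hle : s.indicator (μ[f | m₂]) ≤ᵐ[μ] μ[f | m₂] := by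
    filter_upwards [hf_nonneg] with ω hω
    exact Set.indicator_le_self' (fun _ _ => hω) ω
  calc μ[s.indicator f | m₁]
      =ᵐ[μ] μ[μ[s.indicator f | m₂] | m₁] := (condExp_condExp_of_le hm₁₂ hm₂).symm
    _ =ᵐ[μ] μ[s.indicator (μ[f | m₂]) | m₁] := condExp_congr_ae (condExp_indicator hf hs)
    _ ≤ᵐ[μ] μ[μ[f | m₂] | m₁] :=
      condExp_mono (integrable_condExp.indicator (hm₂ _ hs)) integrable_condExp hle
    _ =ᵐ[μ] μ[f | m₁] := condExp_condExp_of_le hm₁₂ hm₂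

end MeasureTheory

theorem le_max_zero_div_of_mul_le {c x y : ℝ} (hc : 0 < c) (h : c * x ≤ y) :
    x ≤ max y 0 / c := by
  rw [le_div_iff₀ hc]
  linarith [le_max_left y 0]

namespace HajekRenyi

variable {Ω : Type*} {m0 : MeasurableSpace Ω} {μ : Measure Ω}
  (a : ℕ → ℝ) (g : Ω → ℝ) (Y : ℕ → Ω → ℝ)

def crossingSet (k : ℕ) : Set Ω := {ω | ∃ i, 1 ≤ i ∧ i ≤ k ∧ a i * g ω ≤ Y i ω}

noncomputable def majorant (k : ℕ) : Ω → ℝ :=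
  (crossingSet a g Y k).indicator g +
    (crossingSet a g Y k)ᶜ.indicator fun ω => max (Y k ω) 0 / a k

theorem crossingSet_zero : crossingSet a g Y 0 = ∅ := by
  simp [crossingSet]

theorem crossingSet_succ (k : ℕ) :
    crossingSet a g Y (k + 1) = crossingSet a g Y k ∪ {ω | a (k + 1) * g ω ≤ Y (k + 1) ω} := by
  ext ω
  simp only [crossingSet, Set.mem_union, Set.mem_ofPred_eq, Nat.le_succ_iff]
  constructor
  · rintro ⟨i, hi1, hik | rfl, hi⟩
    exacts [Or.inl ⟨i, hi1, hik, hi⟩, Or.inr hi]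
  · rintro (⟨i, hi1, hik, hi⟩ | hi)
    exacts [⟨i, hi1, Or.inl hik, hi⟩, ⟨k + 1, k.succ_pos, Or.inr rfl, hi⟩]

theorem measurableSet_crossingSet (ℱ : Filtration ℕ m0)
    (hadp : ∀ i, 1 ≤ i → StronglyMeasurable[ℱ i] (Y i)) (hgm : StronglyMeasurable[ℱ 1] g) :
    ∀ k, MeasurableSet[ℱ k] (crossingSet a g Y k)
  | 0 => by simp [crossingSet_zero]
  | k + 1 => by
    rw [crossingSet_succ]
    have hgm' : Measurable[ℱ (k + 1)] g := (hgm.mono (ℱ.mono k.succ_pos)).measurable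
    exact (ℱ.mono k.le_succ _ (measurableSet_crossingSet ℱ hadp hgm k)).union
      (measurableSet_le (measurable_const.mul hgm') (hadp _ k.succ_pos).measurable)

theorem integrable_majorant {k : ℕ} (hg : Integrable g μ) (hY : Integrable (Y k) μ)
    (hC : MeasurableSet (crossingSet a g Y k)) : Integrable (majorant a g Y k) μ :=
  (hg.indicator hC).add ((hY.pos_part.div_const (a k)).indicator hC.compl)

theorem indicator_crossingSet_le_majorant {k : ℕ} (hak : 0 ≤ a k) :
    (crossingSet a g Y k).indicator g ≤ majorant a g Y k := fun ω =>
  le_add_of_nonneg_right <|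
    Set.indicator_nonneg (fun _ _ => div_nonneg (le_max_right _ _) hak) ω

theorem majorant_one_le (ha : 0 < a 1) : majorant a g Y 1 ≤ fun ω => max (Y 1 ω) 0 / a 1 := by
  intro ω
  by_cases hω : ω ∈ crossingSet a g Y 1
  · have hcross : a 1 * g ω ≤ Y 1 ω := by simpa [crossingSet_succ, crossingSet_zero] using hω
    simpa [majorant, hω] using le_max_zero_div_of_mul_le ha hcross
  · simp [majorant, hω]

theorem majorant_succ_le {k : ℕ} (hak : 0 < a k) (hmono : a k ≤ a (k + 1)) :
    majorant a g Y (k + 1) ≤ majorant a g Y k + (crossingSet a g Y k)ᶜ.indicator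
      fun ω => (max (Y (k + 1) ω) 0 - max (Y k ω) 0) / a (k + 1) := by
  intro ω
  have hinc : max (Y (k + 1) ω) 0 / a (k + 1) ≤
      max (Y k ω) 0 / a k + (max (Y (k + 1) ω) 0 - max (Y k ω) 0) / a (k + 1) := by
    have := div_le_div_of_nonneg_left (le_max_right (Y k ω) 0) hak hmono
    rw [sub_div]
    linarith
  by_cases hk : ω ∈ crossingSet a g Y k
  · have hk1 : ω ∈ crossingSet a g Y (k + 1) := by
      rw [crossingSet_succ]
      exact Or.inl hk
    simp [majorant, hk, hk1]
  by_cases hk1 : ω ∈ crossingSet a g Y (k + 1)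
  · have hcross : a (k + 1) * g ω ≤ Y (k + 1) ω := by
      rw [crossingSet_succ] at hk1
      exact hk1.resolve_left hk
    have := le_max_zero_div_of_mul_le (hak.trans_le hmono) hcross
    simp [majorant, hk, hk1]
    linarith
  · simp [majorant, hk, hk1]
    linarith

theorem condExp_majorant_succ_le [IsFiniteMeasure μ] (ℱ : Filtration ℕ m0) {k : ℕ} (hk : 1 ≤ k)
    (hYm : StronglyMeasurable[ℱ k] (Y k)) (hY : Integrable (Y k) μ)
    (hY' : Integrable (Y (k + 1)) μ) (hsub : Y k ≤ᵐ[μ] μ[Y (k + 1) | ℱ k])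
    (hg : Integrable g μ) (hC : MeasurableSet[ℱ k] (crossingSet a g Y k))
    (hC' : MeasurableSet (crossingSet a g Y (k + 1)))
    (hak : 0 < a k) (hmono : a k ≤ a (k + 1)) :
    ∀ᵐ ω ∂μ, μ[majorant a g Y (k + 1) | ℱ 1] ω ≤ μ[majorant a g Y k | ℱ 1] ω +
      μ[fun ω => max (Y (k + 1) ω) 0 - max (Y k ω) 0 | ℱ 1] ω / a (k + 1) := by
  set D : Ω → ℝ := fun ω => max (Y (k + 1) ω) 0 - max (Y k ω) 0
  have hD : Integrable (fun ω => D ω / a (k + 1)) μ :=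
    (hY'.pos_part.sub hY.pos_part).div_const _
  have hC₀ : MeasurableSet (crossingSet a g Y k) := ℱ.le k _ hC
  have hW := integrable_majorant a g Y hg hY hC₀
  have hstep := condExp_mono (m := ℱ 1) (integrable_majorant a g Y hg hY' hC')
    (hW.add (hD.indicator hC₀.compl)) (Eventually.of_forall (majorant_succ_le a g Y hak hmono))
  have hD_nonneg : 0 ≤ᵐ[μ] μ[fun ω => D ω / a (k + 1) | ℱ k] := by
    filter_upwards [condExp_div_const D (a (k + 1)) (ℱ k),
      condExp_posPart_sub_posPart_nonneg (ℱ.le k) hYm hY hY' hsub] with ω hω hω'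
    rw [hω]
    exact div_nonneg hω' (hak.trans_le hmono).le
  have hcut := condExp_indicator_le_condExp_of_condExp_nonneg (ℱ.mono hk) (ℱ.le k) hD hC.compl
    hD_nonneg
  filter_upwards [hstep, condExp_add hW (hD.indicator hC₀.compl) (ℱ 1), hcut,
    condExp_div_const D (a (k + 1)) (ℱ 1)] with ω hstepω haddω hcutω hdivω
  rw [haddω, Pi.add_apply] at hstepω
  rw [← hdivω]
  linarith

theorem condExp_majorant_le [IsFiniteMeasure μ] (ℱ : Filtration ℕ m0)
    (hadp : ∀ i, 1 ≤ i → StronglyMeasurable[ℱ i] (Y i)) (hint : ∀ i, 1 ≤ i → Integrable (Y i) μ)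
    (hsub : ∀ i, 1 ≤ i → Y i ≤ᵐ[μ] μ[Y (i + 1) | ℱ i])
    (hapos : ∀ i, 1 ≤ i → 0 < a i) (hamono : ∀ i, 1 ≤ i → a i ≤ a (i + 1))
    (hg : Integrable g μ) (hgm : StronglyMeasurable[ℱ 1] g) {k : ℕ} (hk : 1 ≤ k) :
    ∀ᵐ ω ∂μ, μ[majorant a g Y k | ℱ 1] ω ≤ max (Y 1 ω) 0 / a 1 + ∑ i ∈ Finset.Ico 1 k,
      μ[fun ω => max (Y (i + 1) ω) 0 - max (Y i ω) 0 | ℱ 1] ω / a (i + 1) := by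
  have hC := measurableSet_crossingSet a g Y ℱ hadp hgm
  induction k, hk using Nat.le_induction with
  | base =>
    have hY₁m : StronglyMeasurable[ℱ 1] fun ω => max (Y 1 ω) 0 / a 1 :=
      (((continuous_id.max continuous_const).div_const _).comp_stronglyMeasurable (hadp 1 le_rfl))
    have hY₁ : Integrable (fun ω => max (Y 1 ω) 0 / a 1) μ := (hint 1 le_rfl).pos_part.div_const _
    have hle := condExp_mono (m := ℱ 1)
      (integrable_majorant a g Y hg (hint 1 le_rfl) (ℱ.le 1 _ (hC 1))) hY₁
      (Eventually.of_forall (majorant_one_le a g Y (hapos 1 le_rfl)))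
    rw [condExp_of_stronglyMeasurable (ℱ.le 1) hY₁m hY₁] at hle
    simp only [Finset.Ico_self, Finset.sum_empty, add_zero]
    exact hle
  | succ k hk ih =>
    filter_upwards [ih, condExp_majorant_succ_le a g Y ℱ hk (hadp k hk) (hint k hk)
      (hint (k + 1) (hk.trans k.le_succ)) (hsub k hk) hg (hC k) (ℱ.le _ _ (hC (k + 1)))
      (hapos k hk) (hamono k hk)] with ω hihω hstepω
    rw [Finset.sum_Ico_succ_top hk]
    linarith

end HajekRenyi

open HajekRenyi

theorem hajek_renyi_chow_maximal_inequality_condexp_general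
    {Ω : Type*} {m0 : MeasurableSpace Ω} {μ : Measure Ω} [IsProbabilityMeasure μ]
    (ℱ : Filtration ℕ m0) (Y : ℕ → Ω → ℝ)
    (hadp : ∀ i, 1 ≤ i → StronglyMeasurable[ℱ i] (Y i))
    (hint : ∀ i, 1 ≤ i → Integrable (Y i) μ)
    (hsub : ∀ i j, 1 ≤ i → i ≤ j → Y i ≤ᵐ[μ] μ[Y j | ℱ i])
    (a : ℕ → ℝ) (hapos : ∀ i, 1 ≤ i → 0 < a i)
    (hamono : ∀ i j, 1 ≤ i → i ≤ j → a i ≤ a j)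
    (g : Ω → ℝ) (hgi : Integrable g μ)
    (hgm : StronglyMeasurable[ℱ 1] g)
    (n : ℕ) (hn : 1 ≤ n) :
    ∀ᵐ ω ∂μ,
      (μ[fun ω => g ω *
          Set.indicator {ω | ∃ i, 1 ≤ i ∧ i ≤ n ∧ a i * g ω ≤ Y i ω} (fun _ => (1 : ℝ)) ω
        | ℱ 1]) ω ≤
        max (Y 1 ω) 0 / a 1 +
          ∑ i ∈ Finset.Ico 1 n,
            (μ[fun ω => max (Y (i + 1) ω) 0 - max (Y i ω) 0 | ℱ 1]) ω / a (i + 1) := by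
  have hC : MeasurableSet (crossingSet a g Y n) :=
    ℱ.le n _ (measurableSet_crossingSet a g Y ℱ hadp hgm n)
  have hlhs : (fun ω => g ω *
      Set.indicator {ω | ∃ i, 1 ≤ i ∧ i ≤ n ∧ a i * g ω ≤ Y i ω} (fun _ => (1 : ℝ)) ω) =
      (crossingSet a g Y n).indicator g := by
    ext ω
    rw [← Set.indicator_mul_right]
    simp only [mul_one]
    rfl
  have hle := condExp_mono (m := ℱ 1) (hgi.indicator hC)
    (integrable_majorant a g Y hgi (hint n hn) hC)
    (Eventually.of_forall (indicator_crossingSet_le_majorant a g Y (hapos n hn).le))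
  filter_upwards [hle, condExp_majorant_le a g Y ℱ hadp hint
    (fun i hi => hsub i (i + 1) hi i.le_succ) hapos (fun i hi => hamono i (i + 1) hi i.le_succ)
    hgi hgm hn] with ω hleω hmajω
  rw [hlhs]
  exact hleω.trans hmajω

/-- The Hájek–Rényi–Chow maximal inequality, conditional form. -/
theorem hajek_renyi_chow_maximal_inequality_condexp
    {Ω : Type*} {m0 : MeasurableSpace Ω} {μ : Measure Ω} [IsProbabilityMeasure μ]
    (ℱ : Filtration ℕ m0) (Y : ℕ → Ω → ℝ)
    (hadp : ∀ i, 1 ≤ i → StronglyMeasurable[ℱ i] (Y i))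
    (hint : ∀ i, 1 ≤ i → Integrable (Y i) μ)
    (hsub : ∀ i j, 1 ≤ i → i ≤ j → Y i ≤ᵐ[μ] μ[Y j | ℱ i])
    (a : ℕ → ℝ) (hapos : ∀ i, 1 ≤ i → 0 < a i)
    (hamono : ∀ i j, 1 ≤ i → i ≤ j → a i ≤ a j)
    (g : Ω → ℝ) (hg0 : ∀ ω, 0 ≤ g ω) (hgi : Integrable g μ)
    (hgm : StronglyMeasurable[ℱ 1] g)
    (n : ℕ) (hn : 1 ≤ n) :
    ∀ᵐ ω ∂μ,
      (μ[fun ω => g ω *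
          Set.indicator {ω | ∃ i, 1 ≤ i ∧ i ≤ n ∧ a i * g ω ≤ Y i ω} (fun _ => (1 : ℝ)) ω
        | ℱ 1]) ω ≤
        max (Y 1 ω) 0 / a 1 +
          ∑ i ∈ Finset.Ico 1 n,
            (μ[fun ω => max (Y (i + 1) ω) 0 - max (Y i ω) 0 | ℱ 1]) ω / a (i + 1) :=
  hajek_renyi_chow_maximal_inequality_condexp_general ℱ Y hadp hint hsub a hapos hamono g hgi hgm n
    hn
end

section
/- Submartingale convergence with weights: let (Ω, ℱ, μ) be a probability space with a filtration (ℱ_i)_{i ≥ 1}, let p ≥ 1 be a real number, and let (X_i)_{i ≥ 1} be a nonnegative submartingale with respect to (ℱ_i) such that each X_i^p is integrable. Let (a_i)_{i ≥ 1} be a non-decreasing sequence of positive real numbers with a_i → ∞. If the series Σ_{i=1}^∞ ( E[X_{i+1}^p] − E[X_i^p] ) / a_{i+1}^p converges (its terms are nonnegative), then X_n / a_n → 0 almost everywhere as n → ∞. -/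
/-!
With `Y n = X (n + 1) ^ p`, a nonnegative submartingale by conditional Jensen, and the weights
`c n = (a (n + 1) ^ p)⁻¹`, the process `c n * Y n` is a nonnegative almost supermartingale:
`E[c (n + 1) * Y (n + 1) | ℱ n] ≤ c n * Y n + g n` with the compensator
`g n = c (n + 1) * (E[Y (n + 1) | ℱ n] - Y n) ≥ 0`, whose expectations are the terms of the given
series. By the Robbins–Siegmund argument, `c n * Y n` converges almost everywhere; by Kronecker's
lemma `c n * E[Y n] → 0`, so by Fatou's lemma the limit vanishes.
-/

open MeasureTheory Filter Topology

theorem tendsto_zero_of_tendsto_rpow_zero {ι : Type*} {l : Filter ι} {u : ι → ℝ} {p : ℝ}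
    (hp : 0 < p) (hu : ∀ i, 0 ≤ u i) (h : Tendsto (fun i => u i ^ p) l (𝓝 0)) :
    Tendsto u l (𝓝 0) := by
  have hroot := (Real.continuousAt_rpow_const 0 p⁻¹ (Or.inr (inv_nonneg.2 hp.le))).tendsto.comp h
  rw [Real.zero_rpow (inv_ne_zero hp.ne')] at hroot
  exact hroot.congr fun i => Real.rpow_rpow_inv (hu i) hp.ne'

theorem Antitone.tendsto_mul_sum_range_zero {c b : ℕ → ℝ} {L : ℝ} (hc : Antitone c)
    (hc0 : Tendsto c atTop (𝓝 0)) (hb : ∀ i, 0 ≤ b i)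
    (hL : Tendsto (fun n => ∑ i ∈ Finset.range n, c (i + 1) * b i) atTop (𝓝 L)) :
    Tendsto (fun n => c n * ∑ i ∈ Finset.range n, b i) atTop (𝓝 0) := by
  have hcnn : ∀ n, 0 ≤ c n := hc.le_of_tendsto hc0
  set S := fun n => ∑ i ∈ Finset.range n, c (i + 1) * b i
  have hSL : ∀ n, S n ≤ L := by
    refine Monotone.ge_of_tendsto (fun m n hmn => ?_) hL
    exact Finset.sum_le_sum_of_subset_of_nonneg (Finset.range_mono hmn)
      fun i _ _ => mul_nonneg (hcnn _) (hb i)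
  -- Abel summation in inequality form: beyond `N`, the weight `c n` is at most `c (i + 1)`.
  have htail : ∀ N n, N ≤ n → c n * ∑ i ∈ Finset.range n, b i
      ≤ c n * ∑ i ∈ Finset.range N, b i + (L - S N) := by
    intro N n hNn
    have hIco : c n * ∑ i ∈ Finset.Ico N n, b i ≤ S n - S N := by
      rw [Finset.mul_sum, ← Finset.sum_Ico_eq_sub _ hNn]
      refine Finset.sum_le_sum fun i hi => ?_
      exact mul_le_mul_of_nonneg_right (hc (Finset.mem_Ico.1 hi).2) (hb i)
    rw [← Finset.sum_range_add_sum_Ico b hNn, mul_add]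
    linarith [hSL n]
  refine tendsto_order.2 ⟨fun x hx => Eventually.of_forall fun n =>
    hx.trans_le (mul_nonneg (hcnn n) (Finset.sum_nonneg fun i _ => hb i)), fun ε hε => ?_⟩
  obtain ⟨N, hN⟩ := (hL.eventually (lt_mem_nhds (show L - ε / 2 < L by linarith))).exists
  have hhead : ∀ᶠ n in atTop, c n * ∑ i ∈ Finset.range N, b i < ε / 2 := by
    have h := hc0.mul_const (∑ i ∈ Finset.range N, b i)
    rw [zero_mul] at h
    exact h.eventually (gt_mem_nhds (half_pos hε))
  filter_upwards [hhead, eventually_ge_atTop N] with n hn hNn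
  linarith [htail N n hNn]

namespace MeasureTheory

variable {Ω : Type*} {m0 : MeasurableSpace Ω} {μ : Measure Ω}

def Filtration.shift (ℱ : Filtration ℕ m0) : Filtration ℕ m0 where
  seq n := ℱ (n + 1)
  mono' _ _ h := ℱ.mono (Nat.succ_le_succ h)
  le' n := ℱ.le (n + 1)

theorem Submartingale.rpow [IsFiniteMeasure μ] {ℱ : Filtration ℕ m0} {f : ℕ → Ω → ℝ}
    (hf : Submartingale f ℱ μ) (hf0 : ∀ n, 0 ≤ᵐ[μ] f n) {p : ℝ} (hp : 1 ≤ p)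
    (hfp : ∀ n, Integrable (fun ω => f n ω ^ p) μ) :
    Submartingale (fun n ω => f n ω ^ p) ℱ μ := by
  have hcont : Continuous fun x : ℝ => x ^ p := Real.continuous_rpow_const (by linarith)
  refine ⟨fun n => hcont.comp_stronglyMeasurable (hf.stronglyAdapted n), fun i j hij => ?_, hfp⟩
  have hjensen := (convexOn_rpow hp).map_condExp_le (ℱ.le i)
    hcont.continuousOn.lowerSemicontinuousOn (hf0 j) isClosed_Ici (hf.integrable j) (hfp j)
  filter_upwards [hf.ae_le_condExp hij, hf0 i, hjensen] with ω hle h0 hj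
  exact (Real.rpow_le_rpow h0 hle (by linarith)).trans hj

theorem Submartingale.tendsto_mul_integral_zero [IsFiniteMeasure μ] {ℱ : Filtration ℕ m0}
    {f : ℕ → Ω → ℝ} (hf : Submartingale f ℱ μ) {c : ℕ → ℝ} (hc : Antitone c)
    (hc0 : Tendsto c atTop (𝓝 0)) {L : ℝ}
    (hL : Tendsto (fun n => ∑ i ∈ Finset.range n,
      c (i + 1) * (∫ ω, f (i + 1) ω ∂μ - ∫ ω, f i ω ∂μ)) atTop (𝓝 L)) :
    Tendsto (fun n => c n * ∫ ω, f n ω ∂μ) atTop (𝓝 0) := by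
  have hincr : ∀ i, 0 ≤ ∫ ω, f (i + 1) ω ∂μ - ∫ ω, f i ω ∂μ := fun i => by
    simpa using hf.setIntegral_le (Nat.le_succ i) MeasurableSet.univ
  have hK := hc.tendsto_mul_sum_range_zero hc0 hincr hL
  have h0 : Tendsto (fun n => c n * ∫ ω, f 0 ω ∂μ) atTop (𝓝 0) := by
    simpa using hc0.mul_const (∫ ω, f 0 ω ∂μ)
  simpa [Finset.sum_range_sub (fun n => ∫ ω, f n ω ∂μ), mul_sub] using hK.add h0

theorem ae_tendsto_zero_of_tendsto_integral_zero {Z : ℕ → Ω → ℝ}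
    (hZint : ∀ n, Integrable (Z n) μ) (hZ0 : ∀ n, 0 ≤ᵐ[μ] Z n)
    (hconv : ∀ᵐ ω ∂μ, ∃ l, Tendsto (fun n => Z n ω) atTop (𝓝 l))
    (hint : Tendsto (fun n => ∫ ω, Z n ω ∂μ) atTop (𝓝 0)) :
    ∀ᵐ ω ∂μ, Tendsto (fun n => Z n ω) atTop (𝓝 0) := by
  set l : Ω → ℝ := fun ω => limUnder atTop fun n => Z n ω
  have hl : ∀ᵐ ω ∂μ, Tendsto (fun n => Z n ω) atTop (𝓝 (l ω)) := by
    filter_upwards [hconv] with ω hω using tendsto_nhds_limUnder hω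
  have hZmeas : ∀ n, AEMeasurable (fun ω => ENNReal.ofReal (Z n ω)) μ := fun n =>
    ENNReal.measurable_ofReal.comp_aemeasurable (hZint n).aemeasurable
  have hlmeas : AEMeasurable (fun ω => ENNReal.ofReal (l ω)) μ :=
    aemeasurable_of_tendsto_metrizable_ae atTop hZmeas (by
      filter_upwards [hl] with ω hω using (ENNReal.continuous_ofReal.tendsto _).comp hω)
  have hfatou : ∫⁻ ω, ENNReal.ofReal (l ω) ∂μ = 0 := by
    refine le_antisymm ?_ zero_le
    calc ∫⁻ ω, ENNReal.ofReal (l ω) ∂μ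
        = ∫⁻ ω, liminf (fun n => ENNReal.ofReal (Z n ω)) atTop ∂μ := by
          refine lintegral_congr_ae ?_
          filter_upwards [hl] with ω hω
          exact ((ENNReal.continuous_ofReal.tendsto _).comp hω).liminf_eq.symm
      _ ≤ liminf (fun n => ∫⁻ ω, ENNReal.ofReal (Z n ω) ∂μ) atTop := lintegral_liminf_le' hZmeas
      _ = liminf (fun n => ENNReal.ofReal (∫ ω, Z n ω ∂μ)) atTop := by
          simp_rw [ofReal_integral_eq_lintegral_ofReal (hZint _) (hZ0 _)]
      _ = 0 := by
          have h := (ENNReal.continuous_ofReal.tendsto 0).comp hint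
          rw [ENNReal.ofReal_zero] at h
          exact h.liminf_eq
  filter_upwards [hl, (lintegral_eq_zero_iff' hlmeas).1 hfatou, ae_all_iff.2 hZ0]
    with ω hω hl0 hZ0ω
  have hle : l ω ≤ 0 := ENNReal.ofReal_eq_zero.1 hl0
  have hge : 0 ≤ l ω := ge_of_tendsto' hω hZ0ω
  rwa [le_antisymm hle hge] at hω

theorem eLpNorm_one_le_ofReal_of_integral_le {h : Ω → ℝ} (hint : Integrable h μ)
    (h0 : 0 ≤ᵐ[μ] h) {K : ℝ} (hK : ∫ ω, h ω ∂μ ≤ K) : eLpNorm h 1 μ ≤ ENNReal.ofReal K := by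
  rw [eLpNorm_one_eq_lintegral_enorm, ← ofReal_integral_norm_eq_lintegral_enorm hint]
  refine ENNReal.ofReal_le_ofReal ?_
  rwa [integral_congr_ae (h0.mono fun ω hω => Real.norm_of_nonneg hω)]

theorem submartingale_sum_range [IsFiniteMeasure μ] {ℱ : Filtration ℕ m0} {g : ℕ → Ω → ℝ}
    (hg : StronglyAdapted ℱ g) (hgint : ∀ n, Integrable (g n) μ) (hg0 : ∀ n, 0 ≤ᵐ[μ] g n) :
    Submartingale (fun n ω => ∑ i ∈ Finset.range n, g i ω) ℱ μ := by
  refine submartingale_of_condExp_sub_nonneg_nat (fun n => ?_)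
    (fun n => integrable_finsetSum _ fun i _ => hgint i) fun n => ?_
  · exact Finset.stronglyMeasurable_fun_sum _ fun i hi =>
      (hg i).mono (ℱ.mono (Finset.mem_range.1 hi).le)
  · have hdiff : (fun ω => ∑ i ∈ Finset.range (n + 1), g i ω)
        - (fun ω => ∑ i ∈ Finset.range n, g i ω) = g n :=
      funext fun ω => Finset.sum_range_succ_sub_sum _
    rw [hdiff, condExp_of_stronglyMeasurable (ℱ.le n) (hg n) (hgint n)]
    exact hg0 n

theorem ae_exists_tendsto_of_condExp_succ_le_add [IsFiniteMeasure μ] {ℱ : Filtration ℕ m0}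
    {Z g : ℕ → Ω → ℝ} {C : ℝ} (hZ : StronglyAdapted ℱ Z) (hZint : ∀ n, Integrable (Z n) μ)
    (hZ0 : ∀ n, 0 ≤ᵐ[μ] Z n) (hg : StronglyAdapted ℱ g) (hgint : ∀ n, Integrable (g n) μ)
    (hg0 : ∀ n, 0 ≤ᵐ[μ] g n) (hZg : ∀ n, μ[Z (n + 1) | ℱ n] ≤ᵐ[μ] Z n + g n)
    (hC : ∀ n, ∑ i ∈ Finset.range n, ∫ ω, g i ω ∂μ ≤ C) :
    ∀ᵐ ω ∂μ, ∃ l, Tendsto (fun n => Z n ω) atTop (𝓝 l) := by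
  set A : ℕ → Ω → ℝ := fun n ω => ∑ i ∈ Finset.range n, g i ω with hAdef
  have hA : Submartingale A ℱ μ := submartingale_sum_range hg hgint hg0
  have hApred : ∀ n, StronglyMeasurable[ℱ n] (A (n + 1)) := fun n =>
    Finset.stronglyMeasurable_fun_sum _ fun i hi =>
      (hg i).mono (ℱ.mono (Nat.lt_succ_iff.1 (Finset.mem_range.1 hi)))
  have hAsucc : ∀ n, A (n + 1) = A n + g n := fun n => funext fun ω => Finset.sum_range_succ _ _
  -- The compensator `A` turns `Z` into the submartingale `A - Z`; both `A` and `A - Z` are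
  -- L¹-bounded, hence converge.
  have hAZ : Submartingale (A - Z) ℱ μ := by
    refine submartingale_nat (hA.stronglyAdapted.sub hZ)
      (fun n => (hA.integrable n).sub (hZint n)) fun n => ?_
    filter_upwards [condExp_sub (hA.integrable (n + 1)) (hZint (n + 1)) (ℱ n), hZg n]
      with ω hsub hle
    show A n ω - Z n ω ≤ μ[A (n + 1) - Z (n + 1) | ℱ n] ω
    rw [hsub, Pi.sub_apply,
      condExp_of_stronglyMeasurable (ℱ.le n) (hApred n) (hA.integrable _), hAsucc]
    simp only [Pi.add_apply] at hle ⊢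
    linarith
  have hA0 : ∀ n, 0 ≤ᵐ[μ] A n := fun n => by
    filter_upwards [ae_all_iff.2 hg0] with ω hω using Finset.sum_nonneg fun i _ => hω i
  have hAbdd : ∀ n, ∫ ω, A n ω ∂μ ≤ C := fun n => by
    rw [integral_finsetSum _ fun i _ => hgint i]
    exact hC n
  have hZbdd : ∀ n, ∫ ω, Z n ω ∂μ ≤ ∫ ω, Z 0 ω ∂μ + ∫ ω, A n ω ∂μ := by
    intro n
    induction n with
    | zero => simp [hAdef]
    | succ n ih =>
      have hstep : ∫ ω, Z (n + 1) ω ∂μ ≤ ∫ ω, Z n ω ∂μ + ∫ ω, g n ω ∂μ := by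
        rw [← integral_condExp (ℱ.le n), ← integral_add (hZint n) (hgint n)]
        exact integral_mono_ae integrable_condExp ((hZint n).add (hgint n)) (hZg n)
      rw [hAsucc, Pi.add_def, integral_add (hA.integrable n) (hgint n)]
      linarith
  have hAL1 : ∀ n, eLpNorm (A n) 1 μ ≤ ENNReal.ofReal C := fun n =>
    eLpNorm_one_le_ofReal_of_integral_le (hA.integrable n) (hA0 n) (hAbdd n)
  have hZL1 : ∀ n, eLpNorm (Z n) 1 μ ≤ ENNReal.ofReal (∫ ω, Z 0 ω ∂μ + C) := fun n =>
    eLpNorm_one_le_ofReal_of_integral_le (hZint n) (hZ0 n) ((hZbdd n).trans (by linarith [hAbdd n]))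
  have hAZL1 : ∀ n, eLpNorm ((A - Z) n) 1 μ
      ≤ ↑(C.toNNReal + (∫ ω, Z 0 ω ∂μ + C).toNNReal) := fun n => by
    rw [ENNReal.coe_add]
    exact (eLpNorm_sub_le (hA.integrable n).1 (hZint n).1 le_rfl).trans
      (add_le_add (hAL1 n) (hZL1 n))
  filter_upwards [hA.exists_ae_tendsto_of_bdd hAL1, hAZ.exists_ae_tendsto_of_bdd hAZL1]
    with ω ⟨a, ha⟩ ⟨b, hb⟩
  exact ⟨a - b, (ha.sub hb).congr fun n => by simp⟩

theorem Submartingale.ae_exists_tendsto_mul [IsFiniteMeasure μ] {ℱ : Filtration ℕ m0}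
    {f : ℕ → Ω → ℝ} (hf : Submartingale f ℱ μ) (hf0 : ∀ n, 0 ≤ᵐ[μ] f n) {c : ℕ → ℝ}
    (hc : Antitone c) (hcnn : ∀ n, 0 ≤ c n) {C : ℝ}
    (hC : ∀ n, ∑ i ∈ Finset.range n, c (i + 1) * (∫ ω, f (i + 1) ω ∂μ - ∫ ω, f i ω ∂μ) ≤ C) :
    ∀ᵐ ω ∂μ, ∃ l, Tendsto (fun n => c n * f n ω) atTop (𝓝 l) := by
  set g : ℕ → Ω → ℝ := fun n ω => c (n + 1) * (μ[f (n + 1) | ℱ n] ω - f n ω)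
  have hg0 : ∀ n, 0 ≤ᵐ[μ] g n := fun n => by
    filter_upwards [hf.ae_le_condExp n.le_succ] with ω h
    exact mul_nonneg (hcnn _) (sub_nonneg.2 h)
  have hZg : ∀ n, μ[fun ω => c (n + 1) * f (n + 1) ω | ℱ n]
      ≤ᵐ[μ] (fun ω => c n * f n ω) + g n := fun n => by
    filter_upwards [condExp_smul (μ := μ) (c (n + 1)) (f (n + 1)) (ℱ n), hf0 n] with ω h h0
    rw [show (fun ω => c (n + 1) * f (n + 1) ω) = c (n + 1) • f (n + 1) from rfl, h]
    have hmono : c (n + 1) * f n ω ≤ c n * f n ω := mul_le_mul_of_nonneg_right (hc n.le_succ) h0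
    simp only [g, Pi.add_apply, Pi.smul_apply, smul_eq_mul]
    linarith
  have hgC : ∀ n, ∑ i ∈ Finset.range n, ∫ ω, g i ω ∂μ ≤ C := fun n => by
    refine le_of_eq_of_le (Finset.sum_congr rfl fun i _ => ?_) (hC n)
    rw [integral_const_mul, integral_sub integrable_condExp (hf.integrable i),
      integral_condExp (ℱ.le i)]
  exact ae_exists_tendsto_of_condExp_succ_le_add
    (fun n => (hf.stronglyAdapted n).const_mul _) (fun n => (hf.integrable n).const_mul _)
    (fun n => by filter_upwards [hf0 n] with ω h using mul_nonneg (hcnn n) h)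
    (fun n => (stronglyMeasurable_condExp.sub (hf.stronglyAdapted n)).const_mul _)
    (fun n => (integrable_condExp.sub (hf.integrable n)).const_mul _) hg0 hZg hgC

theorem Submartingale.ae_tendsto_div_zero [IsFiniteMeasure μ] {ℱ : Filtration ℕ m0}
    {f : ℕ → Ω → ℝ} (hf : Submartingale f ℱ μ) (hf0 : ∀ n, 0 ≤ᵐ[μ] f n) {a : ℕ → ℝ}
    (ha0 : ∀ n, 0 < a n) (ha : Monotone a) (hatop : Tendsto a atTop atTop) {L : ℝ}
    (hL : Tendsto (fun n => ∑ i ∈ Finset.range n,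
      (∫ ω, f (i + 1) ω ∂μ - ∫ ω, f i ω ∂μ) / a (i + 1)) atTop (𝓝 L)) :
    ∀ᵐ ω ∂μ, Tendsto (fun n => f n ω / a n) atTop (𝓝 0) := by
  have hc : Antitone fun n => (a n)⁻¹ := fun m n hmn => inv_anti₀ (ha0 m) (ha hmn)
  simp only [div_eq_inv_mul] at hL ⊢
  obtain ⟨C, hC⟩ := hL.bddAbove_range
  have hconv := hf.ae_exists_tendsto_mul hf0 hc (fun n => (inv_pos.2 (ha0 n)).le)
    fun n => hC ⟨n, rfl⟩
  have hint : Tendsto (fun n => ∫ ω, (a n)⁻¹ * f n ω ∂μ) atTop (𝓝 0) := by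
    simpa only [integral_const_mul] using
      hf.tendsto_mul_integral_zero hc hatop.inv_tendsto_atTop hL
  exact ae_tendsto_zero_of_tendsto_integral_zero (fun n => (hf.integrable n).const_mul _)
    (fun n => by filter_upwards [hf0 n] with ω h using mul_nonneg (inv_pos.2 (ha0 n)).le h)
    hconv hint

end MeasureTheory

/-- Submartingale convergence with weights. -/
theorem submartingale_weighted_convergence
    {Ω : Type*} {m0 : MeasurableSpace Ω} {μ : Measure Ω} [IsProbabilityMeasure μ]
    (ℱ : Filtration ℕ m0) (p : ℝ) (hp : 1 ≤ p) (X : ℕ → Ω → ℝ)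
    (hadp : ∀ i, 1 ≤ i → StronglyMeasurable[ℱ i] (X i))
    (hint : ∀ i, 1 ≤ i → Integrable (X i) μ)
    (hsub : ∀ i j, 1 ≤ i → i ≤ j → X i ≤ᵐ[μ] μ[X j | ℱ i])
    (hpos : ∀ i, 1 ≤ i → 0 ≤ᵐ[μ] X i)
    (hXp : ∀ i, 1 ≤ i → Integrable (fun ω => X i ω ^ p) μ)
    (a : ℕ → ℝ) (hapos : ∀ i, 1 ≤ i → 0 < a i)
    (hamono : ∀ i j, 1 ≤ i → i ≤ j → a i ≤ a j)
    (hatop : Tendsto a atTop atTop)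
    (hser : ∃ L : ℝ, Tendsto (fun n => ∑ i ∈ Finset.Ico 1 n,
        ((∫ ω, X (i + 1) ω ^ p ∂μ) - ∫ ω, X i ω ^ p ∂μ) / a (i + 1) ^ p)
      atTop (𝓝 L)) :
    ∀ᵐ ω ∂μ, Tendsto (fun n => X n ω / a n) atTop (𝓝 0) := by
  obtain ⟨L, hL⟩ := hser
  have hp0 : 0 < p := by linarith
  have hX : Submartingale (fun n => X (n + 1)) ℱ.shift μ := by
    refine ⟨fun n => ?_, fun i j hij => ?_, fun n => hint _ n.succ_pos⟩
    · exact hadp _ n.succ_pos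
    · exact hsub _ _ i.succ_pos (by omega)
  have hX0 : ∀ n, 0 ≤ᵐ[μ] X (n + 1) := fun n => hpos _ n.succ_pos
  have hLshift : Tendsto (fun n => ∑ i ∈ Finset.range n,
      ((∫ ω, X (i + 1 + 1) ω ^ p ∂μ) - ∫ ω, X (i + 1) ω ^ p ∂μ) / a (i + 1 + 1) ^ p)
      atTop (𝓝 L) := by
    refine (hL.comp (tendsto_add_atTop_nat 1)).congr fun n => ?_
    rw [Function.comp_apply, Finset.sum_Ico_eq_sum_range, Nat.add_sub_cancel]
    exact Finset.sum_congr rfl fun i _ => by rw [add_comm 1 i]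
  have hconv := (hX.rpow hX0 hp fun n => hXp _ n.succ_pos).ae_tendsto_div_zero
    (fun n => (hX0 n).mono fun ω h => Real.rpow_nonneg h p)
    (fun n => Real.rpow_pos_of_pos (hapos _ n.succ_pos) p)
    (fun i j hij =>
      Real.rpow_le_rpow (hapos _ i.succ_pos).le (hamono _ _ i.succ_pos (by omega)) hp0.le)
    ((tendsto_rpow_atTop hp0).comp (hatop.comp (tendsto_add_atTop_nat 1))) hLshift
  filter_upwards [hconv, ae_all_iff.2 hX0] with ω hω hX0ω
  rw [← tendsto_add_atTop_iff_nat 1]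
  refine tendsto_zero_of_tendsto_rpow_zero hp0
    (fun n => div_nonneg (hX0ω n) (hapos _ n.succ_pos).le) (hω.congr fun n => ?_)
  exact (Real.div_rpow (hX0ω n) (hapos _ n.succ_pos).le p).symm
end

section
/- Conditional p-th moment increment bound for martingales, 1 ≤ p ≤ 2: let (Ω, ℱ, μ) be a probability space with a filtration (ℱ_i)_{i ≥ 1}, let (X_i)_{i ≥ 1} be a martingale with respect to (ℱ_i), and let p be a real number with 1 ≤ p ≤ 2. Assume |X_i|^p and |X_{i+1}|^p are integrable. Then almost everywhere: E[ |X_{i+1}|^p | ℱ_i ] − |X_i|^p ≤ 2 · E[ |X_{i+1} − X_i|^p | ℱ_i ]. -/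
/-! For `1 ≤ p ≤ 2` one has the pointwise bound
`|x + y|^p ≤ |x|^p + p (|x|^p / x) y + 2 |y|^p`, whose middle term is the first-order Taylor
term of `|·|^p` at `x` (it is `0` at `x = 0`, also in Lean, since `0 / 0 = 0`). After scaling
by `|x|` it reduces to `|1 + t|^p ≤ 1 + p t + 2 |t|^p`: for `t ≥ -1` this is a monotonicity
argument in which the derivative is controlled by the subadditivity of `s ↦ s^(p-1)`, and for
`t < -1` it follows from Bernoulli's inequality.

Apply it with `x = X i`, `y = X (i+1) - X i` and condition on `ℱ i`: the first-order term is an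
`ℱ i`-measurable factor times a martingale increment, so its conditional expectation vanishes. -/

open MeasureTheory Filter Set

namespace Real

variable {p : ℝ}

lemma one_add_rpow_le (hp1 : 1 ≤ p) (hp2 : p ≤ 2) {t : ℝ} (ht : 0 ≤ t) :
    (1 + t) ^ p ≤ 1 + p * t + t ^ p := by
  set f : ℝ → ℝ := fun t => 1 + p * t + t ^ p - (1 + t) ^ p
  have hmono : MonotoneOn f (Ici 0) := by
    refine monotoneOn_of_hasDerivWithinAt_nonneg (convex_Ici 0)
      (f' := fun x => p + p * x ^ (p - 1) - p * (1 + x) ^ (p - 1)) ?_ ?_ ?_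
    · have := continuous_rpow_const (by linarith : (0:ℝ) ≤ p)
      fun_prop
    · intro x _
      refine HasDerivAt.hasDerivWithinAt ?_
      have h1 := ((hasDerivAt_id x).const_add 1).rpow_const (p := p) (Or.inr hp1)
      have h2 := hasDerivAt_rpow_const (x := x) (Or.inr hp1)
      convert (((hasDerivAt_id x).const_mul p).const_add 1).add h2 |>.sub h1 using 1
      · rfl
      · simp
    · intro x hx
      rw [interior_Ici] at hx
      have := rpow_add_le_add_rpow zero_le_one (le_of_lt hx) (by linarith : 0 ≤ p - 1)
        (by linarith)
      rw [one_rpow] at this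
      nlinarith
  have := hmono self_mem_Ici ht ht
  simp only [f, mul_zero, add_zero, zero_rpow (by linarith : p ≠ 0), one_rpow] at this
  linarith

lemma one_sub_rpow_le (hp1 : 1 ≤ p) (hp2 : p ≤ 2) {t : ℝ} (ht0 : 0 ≤ t) (ht1 : t ≤ 1) :
    (1 - t) ^ p ≤ 1 - p * t + t ^ p := by
  set f : ℝ → ℝ := fun t => 1 - p * t + t ^ p - (1 - t) ^ p
  have hmono : MonotoneOn f (Icc 0 1) := by
    refine monotoneOn_of_hasDerivWithinAt_nonneg (convex_Icc 0 1)
      (f' := fun x => -p + p * x ^ (p - 1) + p * (1 - x) ^ (p - 1)) ?_ ?_ ?_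
    · have := continuous_rpow_const (by linarith : (0:ℝ) ≤ p)
      fun_prop
    · intro x _
      refine HasDerivAt.hasDerivWithinAt ?_
      have h1 := ((hasDerivAt_id x).const_sub 1).rpow_const (p := p) (Or.inr hp1)
      have h2 := hasDerivAt_rpow_const (x := x) (Or.inr hp1)
      convert (((hasDerivAt_id x).const_mul p).const_sub 1).add h2 |>.sub h1 using 1
      · rfl
      · simp
    · intro x hx
      rw [interior_Icc] at hx
      have := rpow_add_le_add_rpow hx.1.le (by linarith [hx.2] : 0 ≤ 1 - x)
        (by linarith : 0 ≤ p - 1) (by linarith)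
      rw [add_sub_cancel, one_rpow] at this
      nlinarith
  have := hmono (left_mem_Icc.2 zero_le_one) ⟨ht0, ht1⟩ ht0
  simp only [f, mul_zero, sub_zero, zero_rpow (by linarith : p ≠ 0), one_rpow] at this
  linarith

lemma sub_one_rpow_le (hp1 : 1 ≤ p) (hp2 : p ≤ 2) {t : ℝ} (ht : 1 ≤ t) :
    (t - 1) ^ p ≤ 1 - p * t + 2 * t ^ p := by
  have hle : (t - 1) ^ p ≤ t ^ p := rpow_le_rpow (by linarith) (by linarith) (by linarith)
  have hbernoulli : 1 + p * (t - 1) ≤ t ^ p := by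
    simpa using one_add_mul_self_le_rpow_one_add (s := t - 1) (by linarith) hp1
  nlinarith

lemma abs_one_add_rpow_le (hp1 : 1 ≤ p) (hp2 : p ≤ 2) (t : ℝ) :
    |1 + t| ^ p ≤ 1 + p * t + 2 * |t| ^ p := by
  rcases le_or_gt 0 t with ht | ht
  · rw [abs_of_nonneg (by linarith), abs_of_nonneg ht]
    linarith [one_add_rpow_le hp1 hp2 ht, rpow_nonneg ht p]
  rw [abs_of_neg ht]
  rcases le_or_gt (-1) t with ht1 | ht1
  · rw [abs_of_nonneg (by linarith)]
    have := one_sub_rpow_le hp1 hp2 (t := -t) (by linarith) (by linarith)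
    rw [sub_neg_eq_add] at this
    linarith [rpow_nonneg (by linarith : 0 ≤ -t) p]
  · rw [abs_of_neg (by linarith)]
    have := sub_one_rpow_le hp1 hp2 (t := -t) (by linarith)
    rw [show -t - 1 = -(1 + t) by ring] at this
    linarith

lemma abs_add_rpow_le (hp1 : 1 ≤ p) (hp2 : p ≤ 2) (x y : ℝ) :
    |x + y| ^ p ≤ |x| ^ p + p * (|x| ^ p / x) * y + 2 * |y| ^ p := by
  rcases eq_or_ne x 0 with rfl | hx
  · simp only [zero_add, abs_zero, zero_rpow (by linarith : p ≠ 0), div_zero, mul_zero,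
      zero_mul, add_zero]
    linarith [rpow_nonneg (abs_nonneg y) p]
  have hscale : ∀ s, |x * s| ^ p = |x| ^ p * |s| ^ p := fun s => by
    rw [abs_mul, mul_rpow (abs_nonneg x) (abs_nonneg s)]
  calc |x + y| ^ p = |x| ^ p * |1 + y / x| ^ p := by
        rw [← hscale, mul_add, mul_one, mul_div_cancel₀ y hx]
    _ ≤ |x| ^ p * (1 + p * (y / x) + 2 * |y / x| ^ p) :=
        mul_le_mul_of_nonneg_left (abs_one_add_rpow_le hp1 hp2 _) (by positivity)
    _ = |x| ^ p + p * (|x| ^ p / x) * y + 2 * |x * (y / x)| ^ p := by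
        rw [hscale]; ring
    _ = |x| ^ p + p * (|x| ^ p / x) * y + 2 * |y| ^ p := by
        rw [mul_div_cancel₀ y hx]

lemma rpow_sub_one_mul_le_rpow_add_rpow (hp1 : 1 ≤ p) {a b : ℝ} (ha : 0 ≤ a) (hb : 0 ≤ b) :
    a ^ (p - 1) * b ≤ a ^ p + b ^ p := by
  have hp0 : 0 ≤ p - 1 := by linarith
  rcases le_total b a with hba | hab
  · calc a ^ (p - 1) * b ≤ a ^ (p - 1) * a := mul_le_mul_of_nonneg_left hba (by positivity)
      _ = a ^ p := by rw [← rpow_add_one' ha (by linarith)]; ring_nf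
      _ ≤ a ^ p + b ^ p := le_add_of_nonneg_right (by positivity)
  · calc a ^ (p - 1) * b ≤ b ^ (p - 1) * b :=
          mul_le_mul_of_nonneg_right (rpow_le_rpow ha hab hp0) hb
      _ = b ^ p := by rw [← rpow_add_one' hb (by linarith)]; ring_nf
      _ ≤ a ^ p + b ^ p := le_add_of_nonneg_left (by positivity)

lemma abs_rpow_div_mul_le (hp1 : 1 ≤ p) (x y : ℝ) :
    |(|x| ^ p / x) * y| ≤ |x| ^ p + |y| ^ p := by
  rcases eq_or_ne x 0 with rfl | hx
  · simp only [div_zero, zero_mul, abs_zero]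
    positivity
  rw [abs_mul, abs_div, abs_of_nonneg (by positivity), ← rpow_sub_one (abs_ne_zero.2 hx)]
  exact rpow_sub_one_mul_le_rpow_add_rpow hp1 (abs_nonneg x) (abs_nonneg y)

end Real

section ConditionalExpectation

variable {Ω : Type*} {m m0 : MeasurableSpace Ω} {μ : Measure Ω}

lemma integrable_abs_rpow_iff_memLp {p : ℝ} (hp : 0 < p) {f : Ω → ℝ}
    (hf : AEStronglyMeasurable f μ) :
    Integrable (fun ω => |f ω| ^ p) μ ↔ MemLp f (ENNReal.ofReal p) μ := by
  have h := integrable_norm_rpow_iff hf (by simpa using hp) ENNReal.ofReal_ne_top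
  simpa only [Real.norm_eq_abs, ENNReal.toReal_ofReal hp.le] using h

lemma integrable_abs_sub_rpow {p : ℝ} (hp : 0 < p) {f g : Ω → ℝ}
    (hf : AEStronglyMeasurable f μ) (hg : AEStronglyMeasurable g μ)
    (hfp : Integrable (fun ω => |f ω| ^ p) μ) (hgp : Integrable (fun ω => |g ω| ^ p) μ) :
    Integrable (fun ω => |f ω - g ω| ^ p) μ :=
  (integrable_abs_rpow_iff_memLp hp (hf.sub hg)).2
    (((integrable_abs_rpow_iff_memLp hp hf).1 hfp).sub
      ((integrable_abs_rpow_iff_memLp hp hg).1 hgp))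

lemma integrable_abs_rpow_div_mul {p : ℝ} (hp1 : 1 ≤ p) {f g : Ω → ℝ}
    (hf : AEStronglyMeasurable f μ) (hg : AEStronglyMeasurable g μ)
    (hfp : Integrable (fun ω => |f ω| ^ p) μ) (hgp : Integrable (fun ω => |g ω| ^ p) μ) :
    Integrable (fun ω => (|f ω| ^ p / f ω) * g ω) μ := by
  refine Integrable.mono' (hfp.add hgp) ?_ (ae_of_all _ fun ω => ?_)
  · have := hf.aemeasurable
    have := hg.aemeasurable
    exact (by fun_prop : AEMeasurable (fun ω => |f ω| ^ p / f ω * g ω) μ).aestronglyMeasurable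
  · exact Real.abs_rpow_div_mul_le hp1 (f ω) (g ω)

lemma condExp_mul_eq_zero_of_condExp_eq_zero {c D : Ω → ℝ} (hc : StronglyMeasurable[m] c)
    (hcD : Integrable (c * D) μ) (hD : Integrable D μ) (hD0 : μ[D|m] =ᵐ[μ] 0) :
    μ[c * D|m] =ᵐ[μ] 0 := by
  filter_upwards [condExp_mul_of_stronglyMeasurable_left hc hcD hD, hD0] with ω hpull h0
  rw [hpull, Pi.mul_apply, h0, Pi.zero_apply, mul_zero]

theorem condExp_abs_rpow_sub_le {p : ℝ} (hp1 : 1 ≤ p) (hp2 : p ≤ 2) (hm : m ≤ m0)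
    [SigmaFinite (μ.trim hm)] {Y Z : Ω → ℝ} (hY : StronglyMeasurable[m] Y)
    (hYint : Integrable Y μ) (hZint : Integrable Z μ) (hincr : μ[Z - Y|m] =ᵐ[μ] 0)
    (hYp : Integrable (fun ω => |Y ω| ^ p) μ) (hZp : Integrable (fun ω => |Z ω| ^ p) μ) :
    ∀ᵐ ω ∂μ, μ[fun ω => |Z ω| ^ p|m] ω - |Y ω| ^ p ≤
      2 * μ[fun ω => |Z ω - Y ω| ^ p|m] ω := by
  set D := Z - Y
  set c : Ω → ℝ := fun ω => p * (|Y ω| ^ p / Y ω)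
  have hc : StronglyMeasurable[m] c := by
    have := hY.measurable
    exact (by fun_prop : Measurable[m] c).stronglyMeasurable
  have hD : Integrable D μ := hZint.sub hYint
  have hDp : Integrable (fun ω => |D ω| ^ p) μ :=
    integrable_abs_sub_rpow (by linarith) hZint.1 hYint.1 hZp hYp
  have hcD : Integrable (c * D) μ :=
    ((integrable_abs_rpow_div_mul hp1 hYint.1 hD.1 hYp hDp).const_mul p).congr
      (ae_of_all _ fun ω => (mul_assoc _ _ _).symm)
  have hpointwise : ∀ ω, |Z ω| ^ p ≤
      ((fun ω => |Y ω| ^ p) + c * D + (2 : ℝ) • fun ω => |D ω| ^ p) ω := fun ω => by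
    simpa [c, D, mul_assoc] using Real.abs_add_rpow_le hp1 hp2 (Y ω) (D ω)
  have hsplit : μ[(fun ω => |Y ω| ^ p) + c * D + (2 : ℝ) • fun ω => |D ω| ^ p|m] =ᵐ[μ]
      (fun ω => |Y ω| ^ p) + (2 : ℝ) • μ[fun ω => |D ω| ^ p|m] := by
    have hYm : μ[fun ω => |Y ω| ^ p|m] = fun ω => |Y ω| ^ p :=
      condExp_of_stronglyMeasurable hm (by fun_prop) hYp
    filter_upwards [condExp_add (hYp.add hcD) (hDp.smul (2 : ℝ)) m, condExp_add hYp hcD m,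
      condExp_mul_eq_zero_of_condExp_eq_zero hc hcD hD hincr,
      condExp_smul (μ := μ) (m := m) (2 : ℝ) fun ω => |D ω| ^ p] with ω h₁ h₂ h₃ h₄
    rw [Pi.add_apply, h₁, Pi.add_apply, h₂, Pi.add_apply, h₃, hYm, h₄, Pi.zero_apply,
      add_zero]
  filter_upwards [condExp_mono hZp ((hYp.add hcD).add (hDp.smul (2 : ℝ)))
    (ae_of_all _ hpointwise), hsplit] with ω hmono hω
  have h := hmono.trans_eq hω
  simp only [Pi.add_apply, Pi.smul_apply, smul_eq_mul] at h
  exact sub_le_iff_le_add'.2 h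

end ConditionalExpectation

/-- Conditional `p`-th moment increment bound for martingales, `1 ≤ p ≤ 2`. -/
theorem martingale_condexp_rpow_increment_bound
    {Ω : Type*} {m0 : MeasurableSpace Ω} {μ : Measure Ω} [IsProbabilityMeasure μ]
    (ℱ : Filtration ℕ m0) (X : ℕ → Ω → ℝ)
    (hadp : ∀ i, 1 ≤ i → StronglyMeasurable[ℱ i] (X i))
    (hint : ∀ i, 1 ≤ i → Integrable (X i) μ)
    (hmart : ∀ i j, 1 ≤ i → i ≤ j → μ[X j | ℱ i] =ᵐ[μ] X i)
    (p : ℝ) (hp1 : 1 ≤ p) (hp2 : p ≤ 2) (i : ℕ) (hi : 1 ≤ i)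
    (hXi : Integrable (fun ω => |X i ω| ^ p) μ)
    (hXi1 : Integrable (fun ω => |X (i + 1) ω| ^ p) μ) :
    ∀ᵐ ω ∂μ,
      (μ[fun ω => |X (i + 1) ω| ^ p | ℱ i]) ω - |X i ω| ^ p ≤
        2 * (μ[fun ω => |X (i + 1) ω - X i ω| ^ p | ℱ i]) ω := by
  have hi1 : 1 ≤ i + 1 := by omega
  have hincr : μ[X (i + 1) - X i | ℱ i] =ᵐ[μ] 0 := by
    filter_upwards [condExp_sub (hint (i + 1) hi1) (hint i hi) (ℱ i),
      hmart i (i + 1) hi (by omega), hmart i i hi le_rfl] with ω hsub hnext hcur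
    rw [hsub, Pi.sub_apply, hnext, hcur, sub_self, Pi.zero_apply]
  exact condExp_abs_rpow_sub_le hp1 hp2 (ℱ.le i) (hadp i hi) (hint i hi) (hint (i + 1) hi1)
    hincr hXi hXi1
end

section
/- Chow's strong law of large numbers for 1 ≤ p ≤ 2: let (Ω, ℱ, μ) be a probability space with a filtration (ℱ_n)_{n ≥ 1}, and let (Y_n)_{n ≥ 1} be a martingale difference sequence with respect to (ℱ_n) such that each |Y_n|^p is integrable, where p is a real number with 1 ≤ p ≤ 2. Let (a_n)_{n ≥ 1} be a non-decreasing sequence of positive real numbers with a_n → ∞. If Σ_{i=1}^∞ E[|Y_i|^p] / a_i^p < ∞, then (1/a_n) · Σ_{i=1}^n Y_i → 0 almost everywhere as n → ∞. -/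
/-
Put `X k = Y (k + 1) / a (k + 1)`. The partial sums of `X` form a martingale for the shifted
filtration `(ℱ (n + 1))`. For `1 ≤ p ≤ 2` the function `|x| ^ p` lies below its tangent plus
`2p |y| ^ p`: `|x + y| ^ p ≤ |x| ^ p + p sign x |x| ^ (p - 1) y + 2p |y| ^ p`, because its derivative
`p sign x |x| ^ (p - 1)` is `(p - 1)`-Hölder. The middle term has conditional expectation zero, so
`E |∑_{k ≤ n} X k| ^ p ≤ 2p ∑_k E |X k| ^ p` (von Bahr–Esseen), which is bounded by the summability
hypothesis. The martingale is therefore bounded in `L¹` and converges almost everywhere, and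
Kronecker's lemma turns the convergence of `∑ Y k / a k` into `(a n)⁻¹ ∑_{k ≤ n} Y k → 0`.
-/

open MeasureTheory Filter Topology Finset Asymptotics

lemma rpow_sub_one_mul_self {p a : ℝ} (hp : p ≠ 0) (ha : 0 ≤ a) : a ^ (p - 1) * a = a ^ p := by
  conv_rhs => rw [← sub_add_cancel p 1, Real.rpow_add' ha (by simpa using hp), Real.rpow_one]

lemma rpow_tangent_le {p a b : ℝ} (hp : 1 ≤ p) (ha : 0 ≤ a) (hb : 0 ≤ b) :
    a ^ p + p * a ^ (p - 1) * (b - a) ≤ b ^ p := by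
  rcases ha.eq_or_lt with rfl | ha
  · rcases hp.eq_or_lt with rfl | hp
    · simp
    · simp [Real.zero_rpow (by linarith : p ≠ 0), Real.zero_rpow (by linarith : p - 1 ≠ 0),
        Real.rpow_nonneg hb]
  · have bernoulli := one_add_mul_self_le_rpow_one_add (by linarith [div_nonneg hb ha.le] :
      -1 ≤ b / a - 1) hp
    rw [add_sub_cancel, Real.div_rpow hb ha.le, le_div_iff₀ (by positivity)] at bernoulli
    calc a ^ p + p * a ^ (p - 1) * (b - a) = (1 + p * (b / a - 1)) * a ^ p := by
          rw [Real.rpow_sub_one ha.ne']; field_simp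
      _ ≤ b ^ p := bernoulli

lemma rpow_sub_one_mul_le_rpow_add_rpow {p a b : ℝ} (hp : 1 ≤ p) (ha : 0 ≤ a) (hb : 0 ≤ b) :
    a ^ (p - 1) * b ≤ a ^ p + b ^ p := by
  have hp0 : p ≠ 0 := by linarith
  rcases le_total b a with hba | hab
  · calc a ^ (p - 1) * b ≤ a ^ (p - 1) * a := by gcongr
      _ = a ^ p := rpow_sub_one_mul_self hp0 ha
      _ ≤ a ^ p + b ^ p := le_add_of_nonneg_right (Real.rpow_nonneg hb p)
  · calc a ^ (p - 1) * b ≤ b ^ (p - 1) * b := by gcongr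
      _ = b ^ p := rpow_sub_one_mul_self hp0 hb
      _ ≤ a ^ p + b ^ p := le_add_of_nonneg_left (Real.rpow_nonneg ha p)

lemma abs_rpow_sub_rpow_le {q a b : ℝ} (hq0 : 0 ≤ q) (hq1 : q ≤ 1) (ha : 0 ≤ a) (hb : 0 ≤ b) :
    |a ^ q - b ^ q| ≤ |a - b| ^ q := by
  wlog hab : a ≤ b generalizing a b
  · rw [abs_sub_comm, abs_sub_comm a]; exact this hb ha (by linarith)
  have hsub : b ^ q ≤ a ^ q + (b - a) ^ q := by
    simpa using Real.rpow_add_le_add_rpow ha (sub_nonneg.2 hab) hq0 hq1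
  rw [abs_sub_comm a, abs_of_nonneg (sub_nonneg.2 hab), abs_of_nonpos]
  · linarith
  · linarith [Real.rpow_le_rpow ha hab hq0]

/-- `p * signedRpow (p - 1)` is the derivative of `|x| ^ p`. -/
noncomputable def signedRpow (q x : ℝ) : ℝ := SignType.sign x * |x| ^ q

lemma measurable_signedRpow (q : ℝ) : Measurable (signedRpow q) := by
  have hsign : (fun x : ℝ => (SignType.sign x : ℝ)) =
      fun x => if 0 < x then 1 else if x < 0 then -1 else 0 := by
    funext x; rw [sign_apply]; split_ifs <;> simp
  have : Measurable fun x : ℝ => (SignType.sign x : ℝ) := by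
    rw [hsign]
    exact Measurable.ite measurableSet_Ioi measurable_const
      (Measurable.ite measurableSet_Iio measurable_const measurable_const)
  exact this.mul (by fun_prop)

lemma abs_signedRpow_le (q x : ℝ) : |signedRpow q x| ≤ |x| ^ q := by
  rw [signedRpow, abs_mul, abs_of_nonneg (Real.rpow_nonneg (abs_nonneg x) q)]
  refine mul_le_of_le_one_left (Real.rpow_nonneg (abs_nonneg x) q) ?_
  rcases lt_trichotomy x 0 with h | h | h <;> simp [sign_pos, sign_neg, h]

lemma signedRpow_sub_one_mul_self {p : ℝ} (hp : p ≠ 0) (x : ℝ) :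
    signedRpow (p - 1) x * x = |x| ^ p := by
  rw [signedRpow, mul_right_comm, sign_mul_self, mul_comm, rpow_sub_one_mul_self hp (abs_nonneg x)]

lemma abs_signedRpow_sub_le {q : ℝ} (hq0 : 0 ≤ q) (hq1 : q ≤ 1) (u v : ℝ) :
    |signedRpow q u - signedRpow q v| ≤ 2 * |u - v| ^ q := by
  rcases lt_or_ge 0 (u * v) with huv | huv
  · have hsign : (SignType.sign u : ℝ) = SignType.sign v := by
      rcases mul_pos_iff.1 huv with ⟨hu, hv⟩ | ⟨hu, hv⟩ <;> simp [sign_pos, sign_neg, *]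
    have hsign1 : |(SignType.sign u : ℝ)| = 1 := by
      rcases mul_pos_iff.1 huv with ⟨hu, hv⟩ | ⟨hu, hv⟩ <;> simp [sign_pos, sign_neg, *]
    calc |signedRpow q u - signedRpow q v| = |(|u| ^ q - |v| ^ q)| := by
          rw [signedRpow, signedRpow, ← hsign, ← mul_sub, abs_mul, hsign1, one_mul]
      _ ≤ |(|u| - |v|)| ^ q := abs_rpow_sub_rpow_le hq0 hq1 (abs_nonneg u) (abs_nonneg v)
      _ ≤ |u - v| ^ q := Real.rpow_le_rpow (abs_nonneg _) (abs_abs_sub_abs_le_abs_sub u v) hq0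
      _ ≤ 2 * |u - v| ^ q := by linarith [Real.rpow_nonneg (abs_nonneg (u - v)) q]
  · have hu : |u| ≤ |u - v| := sq_le_sq.1 (by nlinarith)
    have hv : |v| ≤ |u - v| := sq_le_sq.1 (by nlinarith)
    calc |signedRpow q u - signedRpow q v| ≤ |signedRpow q u| + |signedRpow q v| := abs_sub _ _
      _ ≤ |u| ^ q + |v| ^ q := add_le_add (abs_signedRpow_le q u) (abs_signedRpow_le q v)
      _ ≤ |u - v| ^ q + |u - v| ^ q := by gcongr
      _ = 2 * |u - v| ^ q := by ring

lemma abs_rpow_tangent_le {p : ℝ} (hp : 1 ≤ p) (x z : ℝ) :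
    |z| ^ p + p * signedRpow (p - 1) z * (x - z) ≤ |x| ^ p := by
  have hp0 : p ≠ 0 := by linarith
  have hx : signedRpow (p - 1) z * x ≤ |z| ^ (p - 1) * |x| :=
    (le_abs_self _).trans (by rw [abs_mul]; gcongr; exact abs_signedRpow_le _ z)
  calc |z| ^ p + p * signedRpow (p - 1) z * (x - z)
      = |z| ^ p + p * (signedRpow (p - 1) z * x) - p * (signedRpow (p - 1) z * z) := by ring
    _ ≤ |z| ^ p + p * (|z| ^ (p - 1) * |x|) - p * (|z| ^ (p - 1) * |z|) := by
      rw [signedRpow_sub_one_mul_self hp0, rpow_sub_one_mul_self hp0 (abs_nonneg z)]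
      gcongr
    _ = |z| ^ p + p * |z| ^ (p - 1) * (|x| - |z|) := by ring
    _ ≤ |x| ^ p := rpow_tangent_le hp (abs_nonneg z) (abs_nonneg x)

lemma abs_add_rpow_le {p : ℝ} (hp1 : 1 ≤ p) (hp2 : p ≤ 2) (x y : ℝ) :
    |x + y| ^ p ≤ |x| ^ p + p * signedRpow (p - 1) x * y + 2 * p * |y| ^ p := by
  have htangent := abs_rpow_tangent_le hp1 x (x + y)
  have hholder : (signedRpow (p - 1) (x + y) - signedRpow (p - 1) x) * y ≤ 2 * |y| ^ p := by
    calc _ ≤ |signedRpow (p - 1) (x + y) - signedRpow (p - 1) x| * |y| := by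
          rw [← abs_mul]; exact le_abs_self _
      _ ≤ 2 * |y| ^ (p - 1) * |y| := by
          gcongr
          simpa using abs_signedRpow_sub_le (by linarith) (by linarith) (x + y) x
      _ = 2 * |y| ^ p := by rw [mul_assoc, rpow_sub_one_mul_self (by linarith) (abs_nonneg y)]
  linarith [mul_le_mul_of_nonneg_left hholder (by linarith : (0 : ℝ) ≤ p)]

lemma Filter.Tendsto.weighted_cesaro {w x : ℕ → ℝ} {L : ℝ} (hx : Tendsto x atTop (𝓝 L))
    (hw : ∀ k, 0 ≤ w k) (hW : Tendsto (fun n => ∑ k ∈ range n, w k) atTop atTop) :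
    Tendsto (fun n => (∑ k ∈ range n, w k)⁻¹ * ∑ k ∈ range n, w k * x k) atTop (𝓝 L) := by
  have hsmall : (fun k => w k * (x k - L)) =o[atTop] w := by
    simpa using (isBigO_refl w atTop).mul_isLittleO
      ((isLittleO_one_iff ℝ).2 (tendsto_sub_nhds_zero_iff.2 hx))
  have hdiv := (hsmall.sum_range hw hW).tendsto_div_nhds_zero
  rw [← tendsto_sub_nhds_zero_iff]
  refine hdiv.congr' ?_
  filter_upwards [hW.eventually_gt_atTop 0] with n hn
  simp only [mul_sub, sum_sub_distrib, ← sum_mul]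
  field_simp

lemma Filter.Tendsto.kronecker {b z : ℕ → ℝ} {L : ℝ}
    (h : Tendsto (fun n => ∑ k ∈ range n, (b k)⁻¹ * z k) atTop (𝓝 L))
    (hb0 : 0 < b 0) (hmono : Monotone b) (htop : Tendsto b atTop atTop) :
    Tendsto (fun n => (b n)⁻¹ * ∑ k ∈ range (n + 1), z k) atTop (𝓝 0) := by
  set t := fun n => ∑ k ∈ range n, (b k)⁻¹ * z k
  have hb : ∀ k, b k ≠ 0 := fun k => (hb0.trans_le (hmono k.zero_le)).ne'
  have habel : ∀ n, (b n)⁻¹ * ∑ k ∈ range (n + 1), z k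
      = t (n + 1) - (b n)⁻¹ * ∑ k ∈ range n, (b (k + 1) - b k) * t (k + 1) := by
    intro n
    have := sum_range_by_parts b (fun k => (b k)⁻¹ * z k) (n + 1)
    simp only [smul_eq_mul, mul_inv_cancel_left₀ (hb _), add_tsub_cancel_right] at this
    rw [this, mul_sub, inv_mul_cancel_left₀ (hb n)]
  -- Up to the factor `1 - b 0 / b n → 1`, the subtracted term is a weighted average of the
  -- `t (k + 1)`, hence tends to `L` like `t (n + 1)` itself.
  have ht : Tendsto (fun n => t (n + 1)) atTop (𝓝 L) := h.comp (tendsto_add_atTop_nat 1)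
  have hsum : ∀ n, ∑ k ∈ range n, (b (k + 1) - b k) = b n - b 0 := sum_range_sub b
  have hcesaro : Tendsto (fun n => (b n - b 0)⁻¹ * ∑ k ∈ range n, (b (k + 1) - b k) * t (k + 1))
      atTop (𝓝 L) := by
    have hW : Tendsto (fun n => ∑ k ∈ range n, (b (k + 1) - b k)) atTop atTop := by
      simp only [hsum]
      simpa only [sub_eq_add_neg] using tendsto_atTop_add_const_right atTop (-b 0) htop
    simpa only [hsum] using ht.weighted_cesaro (fun k => sub_nonneg.2 (hmono k.le_succ)) hW
  have hratio : Tendsto (fun n => 1 - b 0 * (b n)⁻¹) atTop (𝓝 1) := by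
    simpa using tendsto_const_nhds.sub ((tendsto_inv_atTop_zero.comp htop).const_mul (b 0))
  have hlim := ht.sub (hratio.mul hcesaro)
  rw [one_mul, sub_self] at hlim
  refine hlim.congr' ?_
  filter_upwards [htop.eventually_gt_atTop (b 0)] with n hn
  rw [habel n]
  have hbn := hb n
  have : b n - b 0 ≠ 0 := sub_ne_zero.2 hn.ne'
  field_simp

section Martingale

variable {Ω : Type*} {m0 : MeasurableSpace Ω} {μ : Measure Ω}

lemma MeasureTheory.MemLp.integrable_abs_rpow {f : Ω → ℝ} {p : ℝ} (hp : 0 < p)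
    (hf : MemLp f (ENNReal.ofReal p) μ) : Integrable (fun ω => |f ω| ^ p) μ := by
  simpa [Real.norm_eq_abs, ENNReal.toReal_ofReal hp.le] using
    hf.integrable_norm_rpow (by simpa using hp) ENNReal.ofReal_ne_top

lemma MeasureTheory.memLp_of_integrable_abs_rpow {f : Ω → ℝ} {p : ℝ} (hp : 0 < p)
    (hf : AEStronglyMeasurable f μ) (hfp : Integrable (fun ω => |f ω| ^ p) μ) :
    MemLp f (ENNReal.ofReal p) μ :=
  (integrable_norm_rpow_iff hf (by simpa using hp) ENNReal.ofReal_ne_top).1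
    (by simpa [Real.norm_eq_abs, ENNReal.toReal_ofReal hp.le] using hfp)

lemma MeasureTheory.integral_mul_eq_zero_of_condExp_eq_zero {m : MeasurableSpace Ω} (hm : m ≤ m0)
    [SigmaFinite (μ.trim hm)] {g D : Ω → ℝ} (hg : StronglyMeasurable[m] g)
    (hgD : Integrable (g * D) μ) (hD : Integrable D μ) (hD0 : μ[D | m] =ᵐ[μ] 0) :
    ∫ ω, (g * D) ω ∂μ = 0 := by
  calc ∫ ω, (g * D) ω ∂μ = ∫ ω, μ[g * D | m] ω ∂μ := (integral_condExp hm).symm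
    _ = ∫ ω, (g * μ[D | m]) ω ∂μ :=
      integral_congr_ae (condExp_mul_of_stronglyMeasurable_left hg hgD hD)
    _ = ∫ _, (0 : ℝ) ∂μ := integral_congr_ae (hD0.mono fun ω hω => by simp [hω])
    _ = 0 := integral_zero _ _

lemma MeasureTheory.integral_abs_add_rpow_le [IsFiniteMeasure μ] {m : MeasurableSpace Ω}
    (hm : m ≤ m0) {p : ℝ} (hp1 : 1 ≤ p) (hp2 : p ≤ 2) {X D : Ω → ℝ} (hX : StronglyMeasurable[m] X)
    (hXp : MemLp X (ENNReal.ofReal p) μ) (hDp : MemLp D (ENNReal.ofReal p) μ)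
    (hD0 : μ[D | m] =ᵐ[μ] 0) :
    ∫ ω, |X ω + D ω| ^ p ∂μ ≤ ∫ ω, |X ω| ^ p ∂μ + 2 * p * ∫ ω, |D ω| ^ p ∂μ := by
  have hp0 : 0 < p := by linarith
  set g : Ω → ℝ := fun ω => p * signedRpow (p - 1) (X ω)
  have hg : StronglyMeasurable[m] g :=
    (measurable_const.mul ((measurable_signedRpow _).comp hX.measurable)).stronglyMeasurable
  have hXint := hXp.integrable_abs_rpow hp0
  have hDint := hDp.integrable_abs_rpow hp0
  have hgD : Integrable (g * D) μ := by
    refine Integrable.mono' ((hXint.add hDint).const_mul p)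
      ((hg.mono hm).aestronglyMeasurable.mul hDp.aestronglyMeasurable) (ae_of_all _ fun ω => ?_)
    calc ‖g ω * D ω‖ = p * (|signedRpow (p - 1) (X ω)| * |D ω|) := by
          simp [g, abs_of_pos hp0, mul_assoc]
      _ ≤ p * (|X ω| ^ (p - 1) * |D ω|) := by gcongr; exact abs_signedRpow_le _ _
      _ ≤ p * (|X ω| ^ p + |D ω| ^ p) := by
          gcongr; exact rpow_sub_one_mul_le_rpow_add_rpow hp1 (abs_nonneg _) (abs_nonneg _)
  have hcross : ∫ ω, (g * D) ω ∂μ = 0 := integral_mul_eq_zero_of_condExp_eq_zero hm hg hgD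
    (hDp.integrable (by simpa using hp1)) hD0
  calc ∫ ω, |X ω + D ω| ^ p ∂μ
      ≤ ∫ ω, (|X ω| ^ p + (g * D) ω + 2 * p * |D ω| ^ p) ∂μ := by
        refine integral_mono ((hXp.add hDp).integrable_abs_rpow hp0)
          ((hXint.add hgD).add (hDint.const_mul _)) fun ω => ?_
        simpa [g, mul_assoc] using abs_add_rpow_le hp1 hp2 (X ω) (D ω)
    _ = ∫ ω, |X ω| ^ p ∂μ + 2 * p * ∫ ω, |D ω| ^ p ∂μ := by
        rw [integral_add (by exact hXint.add hgD) (by exact hDint.const_mul _),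
          integral_add (by exact hXint) (by exact hgD), hcross, integral_const_mul, add_zero]

lemma MeasureTheory.Martingale.condExp_succ_sub_ae_eq_zero [IsFiniteMeasure μ]
    {𝒢 : Filtration ℕ m0} {f : ℕ → Ω → ℝ} (hf : Martingale f 𝒢 μ) (n : ℕ) :
    μ[f (n + 1) - f n | 𝒢 n] =ᵐ[μ] 0 := by
  have hsub := condExp_sub (hf.integrable (n + 1)) (hf.integrable n) (𝒢 n)
  rw [condExp_of_stronglyMeasurable (𝒢.le n) (hf.stronglyAdapted n) (hf.integrable n)] at hsub
  filter_upwards [hsub, hf.condExp_ae_eq n.le_succ] with ω h1 h2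
  simp [h1, h2]

/-- The von Bahr–Esseen inequality. -/
theorem MeasureTheory.Martingale.integral_abs_rpow_le [IsFiniteMeasure μ] {𝒢 : Filtration ℕ m0}
    {f : ℕ → Ω → ℝ} (hf : Martingale f 𝒢 μ) {p : ℝ} (hp1 : 1 ≤ p) (hp2 : p ≤ 2)
    (hLp : ∀ n, MemLp (f n) (ENNReal.ofReal p) μ) (n : ℕ) :
    ∫ ω, |f n ω| ^ p ∂μ ≤
      ∫ ω, |f 0 ω| ^ p ∂μ + 2 * p * ∑ k ∈ range n, ∫ ω, |f (k + 1) ω - f k ω| ^ p ∂μ := by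
  induction n with
  | zero => simp
  | succ n ih =>
    have hstep := integral_abs_add_rpow_le (𝒢.le n) hp1 hp2 (hf.stronglyAdapted n) (hLp n)
      ((hLp (n + 1)).sub (hLp n)) (hf.condExp_succ_sub_ae_eq_zero n)
    simp only [Pi.sub_apply, add_sub_cancel] at hstep
    rw [sum_range_succ]
    linarith

lemma MeasureTheory.eLpNorm_one_le_of_integral_abs_rpow_le [IsProbabilityMeasure μ] {f : Ω → ℝ}
    {p C : ℝ} (hp : 1 ≤ p) (hf : MemLp f (ENNReal.ofReal p) μ)
    (hC : ∫ ω, |f ω| ^ p ∂μ ≤ C) : eLpNorm f 1 μ ≤ ENNReal.ofReal (C ^ p⁻¹) := by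
  have hp0 : 0 < p := by linarith
  calc eLpNorm f 1 μ ≤ eLpNorm f (ENNReal.ofReal p) μ :=
        eLpNorm_le_eLpNorm_of_exponent_le (by simpa using hp) hf.aestronglyMeasurable
    _ = ENNReal.ofReal ((∫ ω, |f ω| ^ p ∂μ) ^ p⁻¹) := by
        simpa [Real.norm_eq_abs, ENNReal.toReal_ofReal hp0.le] using
          hf.eLpNorm_eq_integral_rpow_norm (by simpa using hp0) ENNReal.ofReal_ne_top
    _ ≤ ENNReal.ofReal (C ^ p⁻¹) := by gcongr

lemma MeasureTheory.integral_abs_const_mul_rpow (c : ℝ) (f : Ω → ℝ) (p : ℝ) :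
    ∫ ω, |c * f ω| ^ p ∂μ = |c| ^ p * ∫ ω, |f ω| ^ p ∂μ := by
  simp_rw [abs_mul, Real.mul_rpow (abs_nonneg c) (abs_nonneg _)]
  exact integral_const_mul _ _

end Martingale

section PartialSums

variable {Ω : Type*} {m0 : MeasurableSpace Ω} {μ : Measure Ω} {𝒢 : Filtration ℕ m0}
  {X : ℕ → Ω → ℝ}

lemma MeasureTheory.martingale_sum_range_succ [IsFiniteMeasure μ]
    (hadp : ∀ k, StronglyMeasurable[𝒢 k] (X k)) (hint : ∀ k, Integrable (X k) μ)
    (hX : ∀ k, μ[X (k + 1) | 𝒢 k] =ᵐ[μ] 0) :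
    Martingale (fun n ω => ∑ k ∈ range (n + 1), X k ω) 𝒢 μ := by
  refine martingale_of_condExp_sub_eq_zero_nat (fun n => ?_)
    (fun n => integrable_finsetSum _ fun k _ => hint k) fun n => ?_
  · exact Finset.stronglyMeasurable_fun_sum _ fun k hk =>
      (hadp k).mono (𝒢.mono (Nat.lt_succ_iff.1 (mem_range.1 hk)))
  · convert hX n using 2
    funext ω
    simp [sum_range_succ _ (n + 1)]

lemma MeasureTheory.integral_abs_sum_range_succ_rpow_le [IsFiniteMeasure μ] {p : ℝ}
    (hp1 : 1 ≤ p) (hp2 : p ≤ 2) (hadp : ∀ k, StronglyMeasurable[𝒢 k] (X k))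
    (hLp : ∀ k, MemLp (X k) (ENNReal.ofReal p) μ) (hX : ∀ k, μ[X (k + 1) | 𝒢 k] =ᵐ[μ] 0)
    (n : ℕ) :
    ∫ ω, |∑ k ∈ range (n + 1), X k ω| ^ p ∂μ ≤
      2 * p * ∑ k ∈ range (n + 1), ∫ ω, |X k ω| ^ p ∂μ := by
  have hM := martingale_sum_range_succ hadp (fun k => (hLp k).integrable (by simpa using hp1)) hX
  have hvbe := hM.integral_abs_rpow_le hp1 hp2 (fun n => memLp_finsetSum _ fun k _ => hLp k) n
  simp only [sum_range_succ _ (_ + 1), add_sub_cancel_left, zero_add, sum_range_one] at hvbe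
  rw [sum_range_succ']
  have hX0 : ∫ ω, |X 0 ω| ^ p ∂μ ≤ 2 * p * ∫ ω, |X 0 ω| ^ p ∂μ :=
    le_mul_of_one_le_left (integral_nonneg fun ω => by positivity) (by linarith)
  linarith

theorem MeasureTheory.ae_exists_tendsto_sum_range_of_summable_integral_abs_rpow
    [IsProbabilityMeasure μ] {p : ℝ} (hp1 : 1 ≤ p) (hp2 : p ≤ 2)
    (hadp : ∀ k, StronglyMeasurable[𝒢 k] (X k)) (hLp : ∀ k, MemLp (X k) (ENNReal.ofReal p) μ)
    (hX : ∀ k, μ[X (k + 1) | 𝒢 k] =ᵐ[μ] 0) (hsum : Summable fun k => ∫ ω, |X k ω| ^ p ∂μ) :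
    ∀ᵐ ω ∂μ, ∃ L, Tendsto (fun n => ∑ k ∈ range n, X k ω) atTop (𝓝 L) := by
  have hM := martingale_sum_range_succ hadp (fun k => (hLp k).integrable (by simpa using hp1)) hX
  have hbdd : ∀ n, ∫ ω, |∑ k ∈ range (n + 1), X k ω| ^ p ∂μ ≤
      2 * p * ∑' k, ∫ ω, |X k ω| ^ p ∂μ := fun n =>
    (integral_abs_sum_range_succ_rpow_le hp1 hp2 hadp hLp hX n).trans <| by
      gcongr
      exact hsum.sum_le_tsum _ fun k _ => integral_nonneg fun ω => by positivity
  filter_upwards [hM.submartingale.exists_ae_tendsto_of_bdd fun n =>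
    eLpNorm_one_le_of_integral_abs_rpow_le hp1 (memLp_finsetSum _ fun k _ => hLp k) (hbdd n)]
    with ω ⟨L, hL⟩
  exact ⟨L, (tendsto_add_atTop_iff_nat 1).1 hL⟩

end PartialSums

def MeasureTheory.Filtration.succ {Ω : Type*} {m0 : MeasurableSpace Ω} (ℱ : Filtration ℕ m0) :
    Filtration ℕ m0 where
  seq n := ℱ (n + 1)
  mono' _ _ h := ℱ.mono (by omega)
  le' n := ℱ.le (n + 1)

theorem chow_strong_law_of_large_numbers_p_le_two_general
    {Ω : Type*} {m0 : MeasurableSpace Ω} {μ : Measure Ω} [IsProbabilityMeasure μ]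
    (ℱ : Filtration ℕ m0) (p : ℝ) (hp1 : 1 ≤ p) (hp2 : p ≤ 2) (Y : ℕ → Ω → ℝ)
    (hadp : ∀ n, 1 ≤ n → StronglyMeasurable[ℱ n] (Y n))
    (hmds : ∀ n, 2 ≤ n → μ[Y n | ℱ (n - 1)] =ᵐ[μ] 0)
    (hYp : ∀ n, 1 ≤ n → Integrable (fun ω => |Y n ω| ^ p) μ)
    (a : ℕ → ℝ) (hapos : ∀ n, 1 ≤ n → 0 < a n)
    (hamono : ∀ i j, 1 ≤ i → i ≤ j → a i ≤ a j)
    (hatop : Tendsto a atTop atTop)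
    (hsum : Summable fun i : ℕ => (∫ ω, |Y (i + 1) ω| ^ p ∂μ) / a (i + 1) ^ p) :
    ∀ᵐ ω ∂μ, Tendsto (fun n => (a n)⁻¹ * ∑ i ∈ Finset.Icc 1 n, Y i ω) atTop (𝓝 0) := by
  set X : ℕ → Ω → ℝ := fun k ω => (a (k + 1))⁻¹ * Y (k + 1) ω
  have hadpX : ∀ k, StronglyMeasurable[ℱ.succ k] (X k) := fun k =>
    (hadp (k + 1) (by omega)).const_mul _
  have hLpX : ∀ k, MemLp (X k) (ENNReal.ofReal p) μ := fun k =>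
    (memLp_of_integrable_abs_rpow (by linarith) ((hadp (k + 1) (by omega)).mono
      (ℱ.le _)).aestronglyMeasurable (hYp (k + 1) (by omega))).const_mul _
  have hmdsX : ∀ k, μ[X (k + 1) | ℱ.succ k] =ᵐ[μ] 0 := fun k => by
    have hY : μ[Y (k + 2) | ℱ (k + 1)] =ᵐ[μ] 0 := hmds (k + 2) (by omega)
    change μ[(a (k + 2))⁻¹ • Y (k + 2) | ℱ (k + 1)] =ᵐ[μ] 0
    filter_upwards [condExp_smul (a (k + 2))⁻¹ (Y (k + 2)) (ℱ (k + 1)), hY] with ω h1 h2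
    simp [h1, h2]
  have hsumX : Summable fun k => ∫ ω, |X k ω| ^ p ∂μ := hsum.congr fun k => by
    have ha := hapos (k + 1) (by omega)
    rw [integral_abs_const_mul_rpow, abs_inv, abs_of_pos ha, Real.inv_rpow ha.le, div_eq_inv_mul]
  filter_upwards [ae_exists_tendsto_sum_range_of_summable_integral_abs_rpow hp1 hp2 hadpX hLpX
    hmdsX hsumX] with ω ⟨L, hL⟩
  have hkron := hL.kronecker (b := fun k => a (k + 1)) (hapos 1 le_rfl)
    (fun i j hij => hamono _ _ (by omega) (by omega)) (hatop.comp (tendsto_add_atTop_nat 1))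
  refine (tendsto_add_atTop_iff_nat 1).1 (hkron.congr fun n => ?_)
  rw [range_eq_Ico, sum_Ico_add' (fun i => Y i ω), zero_add, Ico_add_one_right_eq_Icc]

/-- Chow's strong law of large numbers for `1 ≤ p ≤ 2`. -/
theorem chow_strong_law_of_large_numbers_p_le_two
    {Ω : Type*} {m0 : MeasurableSpace Ω} {μ : Measure Ω} [IsProbabilityMeasure μ]
    (ℱ : Filtration ℕ m0) (p : ℝ) (hp1 : 1 ≤ p) (hp2 : p ≤ 2) (Y : ℕ → Ω → ℝ)
    (hint : ∀ n, 1 ≤ n → Integrable (Y n) μ)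
    (hadp : ∀ n, 1 ≤ n → StronglyMeasurable[ℱ n] (Y n))
    (hmds : ∀ n, 2 ≤ n → μ[Y n | ℱ (n - 1)] =ᵐ[μ] 0)
    (hYp : ∀ n, 1 ≤ n → Integrable (fun ω => |Y n ω| ^ p) μ)
    (a : ℕ → ℝ) (hapos : ∀ n, 1 ≤ n → 0 < a n)
    (hamono : ∀ i j, 1 ≤ i → i ≤ j → a i ≤ a j)
    (hatop : Tendsto a atTop atTop)
    (hsum : Summable fun i : ℕ => (∫ ω, |Y (i + 1) ω| ^ p ∂μ) / a (i + 1) ^ p) :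
    ∀ᵐ ω ∂μ, Tendsto (fun n => (a n)⁻¹ * ∑ i ∈ Finset.Icc 1 n, Y i ω) atTop (𝓝 0) :=
  chow_strong_law_of_large_numbers_p_le_two_general ℱ p hp1 hp2 Y hadp hmds hYp a hapos hamono hatop
    hsum
end

section
/- Band projections commute with countable suprema (evaluated form): let E be a conditionally complete lattice-ordered abelian group (e.g., a Dedekind complete Riesz space), let e ∈ E with e ≥ 0, and let (f_n)_{n∈ℕ} be a sequence in E with f_n ≥ 0 for all n that is bounded above. Then ⨆_{m∈ℕ} ( e ⊓ (m • ⨆_{n∈ℕ} f_n) ) = ⨆_{n∈ℕ} ⨆_{m∈ℕ} ( e ⊓ (m • f_n) ). (All suprema involved exist, since each element e ⊓ (m • f) with f ≥ 0 lies between 0 and e.) -/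
/-!
Write `P g e = ⨆ m, e ⊓ m • g` for the projection of `e` onto the band generated by `g`.
For `g ≥ 0` it is characterised as the least `u ≥ 0` with `(e - u) ⊓ g = 0`: the component
`(e - P g e) ⊓ g` vanishes because adding it to `e ⊓ m • g` stays below `e ⊓ (m + 1) • g`, and any
such `u` bounds every `e ⊓ m • g` by induction on `m`. With `u = ⨆ n, P (f n) e`, the element
`e - u` is disjoint from every `f n`, hence (by the infinite distributive law of a conditionally
complete ℓ-group) from `⨆ n, f n`, so `P (⨆ n, f n) e ≤ u`; the reverse inequality is monotonicity.
-/

open Set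

section Lattice

variable {E : Type*} [Lattice E] [AddCommGroup E] [AddLeftMono E]

lemma inf_add_eq_self_of_sub_inf_eq_zero {e u g : E} (h : (e - u) ⊓ g = 0) :
    e ⊓ (u + g) = u := by
  have := add_inf (e - u) g u
  rwa [h, add_zero, add_sub_cancel, eq_comm] at this

end Lattice

section ConditionallyCompleteLattice

variable {E : Type*} [ConditionallyCompleteLattice E]

section AddMonoid

variable [AddMonoid E]

def bandProj (g e : E) : E := ⨆ m : ℕ, e ⊓ m • g

lemma bddAbove_range_inf_nsmul (g e : E) : BddAbove (range fun m : ℕ => e ⊓ m • g) :=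
  ⟨e, forall_mem_range.2 fun _ => inf_le_left⟩

lemma bandProj_le (g e : E) : bandProj g e ≤ e :=
  ciSup_le fun _ => inf_le_left

lemma bandProj_nonneg (g : E) {e : E} (he : 0 ≤ e) : 0 ≤ bandProj g e :=
  (le_inf he (zero_nsmul g).ge).trans (le_ciSup (bddAbove_range_inf_nsmul g e) 0)

end AddMonoid

variable [AddCommGroup E] [AddLeftMono E]

lemma inf_ciSup_eq {ι : Type*} [Nonempty ι] (e : E) {s : ι → E} (hs : BddAbove (range s)) :
    e ⊓ ⨆ i, s i = ⨆ i, e ⊓ s i := by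
  have hb : BddAbove (range fun i => e ⊓ s i) := ⟨e, forall_mem_range.2 fun _ => inf_le_left⟩
  refine le_antisymm ?_ (ciSup_le fun i => inf_le_inf_left e (le_ciSup hs i))
  set T := ⨆ i, s i
  set b := ⨆ i, e ⊓ s i
  -- `x ⊓ y = x + y - x ⊔ y` turns the infimum into an expression monotone in the supremum.
  have hT : T ≤ b + e ⊔ T - e := ciSup_le fun i => by
    rw [le_sub_iff_add_le', ← inf_add_sup e (s i)]
    exact add_le_add (le_ciSup hb i) (sup_le_sup_left (le_ciSup hs i) e)
  rw [eq_sub_of_add_eq (inf_add_sup e T), sub_le_iff_le_add]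
  exact le_sub_iff_add_le'.mp hT

lemma bandProj_mono {g g' : E} (h : g ≤ g') (e : E) : bandProj g e ≤ bandProj g' e :=
  ciSup_mono (bddAbove_range_inf_nsmul g' e) fun m => inf_le_inf_left e (nsmul_le_nsmul_right h m)

lemma sub_bandProj_inf_eq_zero {g : E} (hg : 0 ≤ g) (e : E) : (e - bandProj g e) ⊓ g = 0 := by
  set w := (e - bandProj g e) ⊓ g
  have hb := bddAbove_range_inf_nsmul g e
  have hw : bandProj g e + w ≤ bandProj g e := by
    rw [bandProj, ciSup_add hb]
    refine ciSup_le fun m => le_trans ?_ (le_ciSup hb (m + 1))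
    refine le_inf (add_le_of_le_sub_left ?_) ?_
    · exact inf_le_left.trans (sub_le_sub_left (le_ciSup hb m) e)
    · rw [succ_nsmul]
      exact add_le_add inf_le_right inf_le_right
  exact le_antisymm ((add_le_iff_nonpos_right _).1 hw)
    (le_inf (sub_nonneg.2 (bandProj_le g e)) hg)

lemma bandProj_le_of_sub_inf_eq_zero {g e u : E} (hg : 0 ≤ g) (hu : 0 ≤ u)
    (h : (e - u) ⊓ g = 0) : bandProj g e ≤ u := by
  refine ciSup_le fun m => ?_
  induction m with
  | zero =>
    rw [zero_nsmul]
    exact inf_le_right.trans hu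
  | succ m ih =>
    calc e ⊓ (m + 1) • g ≤ e ⊓ (e ⊓ m • g + g) := by
          rw [succ_nsmul, inf_add]
          exact le_inf inf_le_left (le_inf (inf_le_left.trans (le_add_of_nonneg_right hg))
            inf_le_right)
      _ ≤ e ⊓ (u + g) := inf_le_inf_left e (add_le_add ih le_rfl)
      _ = u := inf_add_eq_self_of_sub_inf_eq_zero h

end ConditionallyCompleteLattice

/-- Band projections commute with countable suprema (evaluated form). -/
theorem band_projection_iSup
    {E : Type*} [ConditionallyCompleteLattice E] [AddCommGroup E]
    [CovariantClass E E (· + ·) (· ≤ ·)]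
    (e : E) (he : 0 ≤ e) (f : ℕ → E) (hf : ∀ n, 0 ≤ f n)
    (hbdd : BddAbove (Set.range f)) :
    ⨆ m : ℕ, (e ⊓ m • ⨆ n, f n) = ⨆ n, ⨆ m : ℕ, (e ⊓ m • f n) := by
  change bandProj (⨆ n, f n) e = ⨆ n, bandProj (f n) e
  set u := ⨆ n, bandProj (f n) e
  have hP : BddAbove (range fun n => bandProj (f n) e) :=
    ⟨e, forall_mem_range.2 fun n => bandProj_le (f n) e⟩
  have hu_le : u ≤ e := ciSup_le fun n => bandProj_le (f n) e
  have hu_nonneg : 0 ≤ u := (bandProj_nonneg _ he).trans (le_ciSup hP 0)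
  have hdisj : ∀ n, (e - u) ⊓ f n = 0 := fun n => le_antisymm
    ((inf_le_inf_right _ (sub_le_sub_left (le_ciSup hP n) e)).trans
      (sub_bandProj_inf_eq_zero (hf n) e).le)
    (le_inf (sub_nonneg.2 hu_le) (hf n))
  have hdisj_iSup : (e - u) ⊓ ⨆ n, f n = 0 := by
    rw [inf_ciSup_eq _ hbdd, iSup_congr hdisj, ciSup_const]
  exact le_antisymm
    (bandProj_le_of_sub_inf_eq_zero ((hf 0).trans (le_ciSup hbdd 0)) hu_nonneg hdisj_iSup)
    (ciSup_le fun n => bandProj_mono (le_ciSup hbdd n) e)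
end
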